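/- arXiv:1910.04001 — 6 statements merged into one kernel-verified Lean document; each statement's English description precedes it below -/
import Mathlib

section
/- Let μ be any probability measure on [0,π/2]^{ℕ*×ℕ*} that is absolutely continuous with respect to η. Then for μ-almost every configuration θ the following holds: for every a = (a_k)_{k≥1} ∈ ℓ₀, N_a(θ) = a! · ∏_{k≥1} ( Σ_{(b_j)∈ℕ^{m_k} : 2·Σ_{j=1}^{m_k} b_j = a_k} ∏_{j=1}^{m_k} Σ_{c=0}^{b_j} (1/(c!(b_j−c)!))² ). In particular, N_a(θ) = 0 whenever some a_k is odd, and almost surely N_a(θ) depends only on (a_k)_{k≥1} and (m_k)_{k≥1}. -/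
/-!
For η-almost every θ the vectors `√λ_k/(2π) · ζ⁽¹⁾(θ_{k,j})` and `√λ_k/(2π) · ζ⁽²⁾(θ_{k,j})` are
linearly independent over ℤ: a fixed non-trivial integer relation involves some angle `θ_{k,j}`
through a function that is injective on `[0, π/2]`, so by Fubini it holds only on an η-null set,
and there are countably many relations. As `ζ⁽³⁾ = -ζ⁽¹⁾` and `ζ⁽⁴⁾ = -ζ⁽²⁾`, a sum of points of
the `Λ_k(θ)` then vanishes exactly when for every `(k, j)` the directions `ζ⁽¹⁾, ζ⁽³⁾` occur
equally often, and so do `ζ⁽²⁾, ζ⁽⁴⁾`. Counting these words by multinomial coefficients gives the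
factor `a_k! · Σ_b ∏_j Σ_c (1/(c!(b_j-c)!))²` for each `k`.
-/

open MeasureTheory Filter Real

noncomputable section

namespace Stmt3

/-- The four symmetric directions `ζ⁽¹⁾(θ) = (cos θ, sin θ)`, `ζ⁽²⁾(θ) = (−cos θ, sin θ)`,
`ζ⁽³⁾(θ) = −ζ⁽¹⁾(θ)`, `ζ⁽⁴⁾(θ) = −ζ⁽²⁾(θ)`. -/
def zeta : Fin 4 → ℝ → ℝ × ℝ
  | 0, θ => (Real.cos θ, Real.sin θ)
  | 1, θ => (-Real.cos θ, Real.sin θ)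
  | 2, θ => (-Real.cos θ, -Real.sin θ)
  | 3, θ => (Real.cos θ, -Real.sin θ)

/-- The randomized wave vectors set
`Λ_k(θ) = (√λ_k/(2π))·{ζ⁽ⁱ⁾(θ_{k,j}) : 1 ≤ j ≤ m_k, 1 ≤ i ≤ 4}` (0-based indexing in `k, j`). -/
def waveVectors (lam : ℕ → ℝ) (m : ℕ → ℕ) (θ : ℕ × ℕ → ℝ) (k : ℕ) : Set (ℝ × ℝ) :=
  {ξ | ∃ j < m k, ∃ i : Fin 4, ξ = (Real.sqrt (lam k) / (2 * π)) • zeta i (θ (k, j))}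

/-- `N_a(θ)`: the number of tuples `(ξ_{k,l})_{k ≥ 1, 1 ≤ l ≤ a_k}` with `ξ_{k,l} ∈ Λ_k(θ)`
summing to `0`.  Here `a : ℕ →₀ ℕ` encodes the finitely supported sequence `(a_k)_{k ≥ 1}`. -/
def Ncount (lam : ℕ → ℝ) (m : ℕ → ℕ) (θ : ℕ × ℕ → ℝ) (a : ℕ →₀ ℕ) : ℕ :=
  Nat.card {ξ : (k : ℕ) → Fin (a k) → ℝ × ℝ //
    (∀ k l, ξ k l ∈ waveVectors lam m θ k) ∧
    ∑ k ∈ a.support, ∑ l, ξ k l = 0}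

/-- The uniform probability measure on `[0, π/2]`. -/
def unif : Measure ℝ := (ENNReal.ofReal (π / 2))⁻¹ • volume.restrict (Set.Icc 0 (π / 2))

/-- `η` is the product over `ℕ* × ℕ*` of the uniform probability measures on `[0, π/2]`:
a probability measure on configurations giving the product of uniform measures to every
finite-dimensional cylinder set. -/
def IsProductUniform (η : Measure (ℕ × ℕ → ℝ)) : Prop :=
  IsProbabilityMeasure η ∧
  ∀ (s : Finset (ℕ × ℕ)) (B : ℕ × ℕ → Set ℝ), (∀ i, MeasurableSet (B i)) →
    η {θ | ∀ i ∈ s, θ i ∈ B i} = ∏ i ∈ s, unif (B i)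

/-- `Σ_{(b_j) ∈ ℕ^{mk} : 2·Σ_j b_j = n} ∏_{j=1}^{mk} Σ_{c=0}^{b_j} (1/(c!(b_j−c)!))²`
(a finite sum, expressed as a `tsum`). -/
def innerSum (mk n : ℕ) : ℝ :=
  ∑' b : Fin mk → ℕ, if 2 * ∑ j, b j = n then
    ∏ j, ∑ c ∈ Finset.range (b j + 1),
      (((c.factorial * (b j - c).factorial : ℕ) : ℝ))⁻¹ ^ 2
  else 0

open Finset Function

theorem _root_.Nat.card_pi_eq_prod_of_card_eq_one {ι : Type*} {β : ι → Type*} (s : Finset ι)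
    (h : ∀ i ∉ s, Nat.card (β i) = 1) : Nat.card (∀ i, β i) = ∏ i ∈ s, Nat.card (β i) := by
  classical
  have (i : {i // i ∉ s}) : Unique (β i) :=
    have := Nat.card_eq_one_iff_unique.1 (h i i.2); @uniqueOfSubsingleton _ this.1 this.2.some
  rw [Nat.card_congr ((Equiv.piEquivPiSubtypeProd (· ∈ s) β).trans (Equiv.prodUnique _ _)),
    Nat.card_pi, prod_coe_sort s fun i => Nat.card (β i)]

theorem _root_.MeasureTheory.Measure.pi_eq_zero_of_forall_update {ι : Type*} [Fintype ι]
    [DecidableEq ι] {X : ι → Type*} [∀ i, MeasurableSpace (X i)] {ν : ∀ i, Measure (X i)}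
    [∀ i, SigmaFinite (ν i)] {s : Set (∀ i, X i)} (hs : MeasurableSet s) (i : ι)
    (h : ∀ x, ν i {t | update x i t ∈ s} = 0) : Measure.pi ν s = 0 := by
  rcases s.eq_empty_or_nonempty with rfl | ⟨x, -⟩
  · exact measure_empty
  have hslice : (fun y => ∫⁻ t, s.indicator 1 (update y i t) ∂ν i) = 0 := funext fun y => by
    rw [Pi.zero_apply, ← h y]
    exact lintegral_indicator_one (hs.preimage (measurable_update y))
  rw [← lintegral_indicator_one hs, lintegral_eq_lmarginal_univ x,
    lmarginal_erase' _ (measurable_one.indicator hs) (mem_univ i), hslice]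
  simp [lmarginal]

theorem _root_.MeasureTheory.Measure.pi_sum_eq_zero_null {ι : Type*} [Fintype ι]
    [DecidableEq ι] {X : ι → Type*} [∀ i, MeasurableSpace (X i)] {ν : ∀ i, Measure (X i)}
    [∀ i, SigmaFinite (ν i)] {E : Type*} [AddCommGroup E] [MeasurableSpace E]
    [MeasurableAdd₂ E] [MeasurableSingletonClass E] {φ : ∀ i, X i → E}
    (hφ : ∀ i, Measurable (φ i)) (i : ι) (hi : ∀ c, ν i (φ i ⁻¹' {c}) = 0) :
    Measure.pi ν {x | ∑ j, φ j (x j) = 0} = 0 := by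
  refine Measure.pi_eq_zero_of_forall_update ?_ i fun x => ?_
  · exact (Finset.measurable_sum _ fun j _ => (hφ j).comp (measurable_pi_apply j))
      (measurableSet_singleton 0)
  convert hi (-∑ j ∈ univ \ {i}, φ j (x j)) using 2
  ext t
  simp only [Set.mem_ofPred_eq, Set.mem_preimage, Set.mem_singleton_iff]
  rw [Finset.sum_congr rfl fun j _ => apply_update φ x i t j, sum_update_of_mem (mem_univ i),
    eq_neg_iff_add_eq_zero]

section WordCount

variable {σ : Type*} {n : ℕ}

def wordCount (f : Fin n → σ) : σ →₀ ℕ := ∑ l, Finsupp.single (f l) 1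

lemma sum_wordCount_smul [Fintype σ] {E : Type*} [AddCommMonoid E] (f : Fin n → σ) (u : σ → E) :
    ∑ d, wordCount f d • u d = ∑ l, u (f l) := by
  classical
  simp only [wordCount, Finsupp.finsetSum_apply, Finset.sum_smul, Finsupp.single_apply, ite_smul,
    one_smul, zero_smul]
  rw [Finset.sum_comm]
  simp

lemma sum_wordCount [Fintype σ] (f : Fin n → σ) : ∑ d, wordCount f d = n := by
  simpa using sum_wordCount_smul f (fun _ => (1 : ℕ))

lemma wordCount_of_isEmpty [IsEmpty (Fin n)] (f : Fin n → σ) : wordCount f = 0 := by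
  simp [wordCount]

open MvPolynomial in
lemma card_wordCount_eq_multinomial [Fintype σ] [DecidableEq σ] (N : σ →₀ ℕ)
    (hN : N.sum (fun _ k => k) = n) : #{f : Fin n → σ | wordCount f = N} = N.multinomial := by
  -- both sides are the coefficient of `X ^ N` in `(∑ i, X i) ^ n`
  have hpow : (∑ i, X i : MvPolynomial σ ℕ) ^ n = ∑ f : Fin n → σ, monomial (wordCount f) 1 := by
    rw [← Fin.prod_const, Finset.prod_univ_sum, Fintype.piFinset_univ]
    simp [wordCount, monomial_sum_one, X]
  have := coeff_sum_X_pow_of_fintype (R := ℕ) N n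
  rw [hpow, if_pos hN, coeff_sum] at this
  simpa [coeff_monomial, Finset.sum_boole] using this

lemma card_wordCount_mul_prod_factorial [Fintype σ] [DecidableEq σ] {N : σ → ℕ}
    (hN : ∑ d, N d = n) :
    #{f : Fin n → σ | ⇑(wordCount f) = N} * ∏ d, (N d).factorial = n.factorial := by
  set N' := Finsupp.equivFunOnFinite.symm N
  have hsum : N'.sum (fun _ k => k) = n := by simpa [N', Finsupp.sum_fintype] using hN
  rw [Finset.filter_congr (q := fun f => wordCount f = N') fun f _ => by
      simp [N', DFunLike.ext_iff, funext_iff], card_wordCount_eq_multinomial N' hsum,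
    Finsupp.multinomial_eq_of_support_subset (subset_univ _), mul_comm]
  simpa [N', hN] using Nat.multinomial_spec univ N'

end WordCount

section Balanced

variable {M n : ℕ}

def IsBalanced (N : Fin M × Fin 4 → ℕ) : Prop :=
  ∀ j, N (j, 0) = N (j, 2) ∧ N (j, 1) = N (j, 3)

instance (N : Fin M × Fin 4 → ℕ) : Decidable (IsBalanced N) := by
  unfold IsBalanced; infer_instance

lemma sum_prod_fin_four (N : Fin M × Fin 4 → ℕ) :
    ∑ d, N d = ∑ j, (N (j, 0) + N (j, 1) + N (j, 2) + N (j, 3)) := by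
  simp [Fintype.sum_prod_type, Fin.sum_univ_four]

def balancedCount (b c : Fin M → ℕ) (d : Fin M × Fin 4) : ℕ :=
  ![c d.1, b d.1 - c d.1, c d.1, b d.1 - c d.1] d.2

def halfCompositions (M n : ℕ) : Finset (Fin M → ℕ) :=
  {b ∈ Fintype.piFinset fun _ => range (n + 1) | 2 * ∑ j, b j = n}

lemma innerSum_eq_sum (M n : ℕ) :
    innerSum M n = ∑ b ∈ halfCompositions M n, ∑ c ∈ Fintype.piFinset fun j => range (b j + 1),
      ∏ j, ((((c j).factorial * (b j - c j).factorial : ℕ) : ℝ))⁻¹ ^ 2 := by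
  rw [innerSum, tsum_eq_sum (s := Fintype.piFinset fun _ => range (n + 1)), halfCompositions,
    sum_filter]
  · exact sum_congr rfl fun b _ => by split_ifs <;> simp [prod_univ_sum]
  · intro b hb
    rw [if_neg]
    rintro rfl
    refine hb (Fintype.mem_piFinset.2 fun j => mem_range.2 ?_)
    have := single_le_sum (f := b) (fun j _ => Nat.zero_le (b j)) (mem_univ j)
    omega

lemma innerSum_of_odd (h : Odd n) : innerSum M n = 0 := by
  have hne (b : Fin M → ℕ) : 2 * ∑ j, b j ≠ n := fun hb =>
    Nat.not_even_iff_odd.2 h ⟨∑ j, b j, by omega⟩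
  simp [innerSum, hne]

lemma card_wordCount_eq_balancedCount {b c : Fin M → ℕ} (hb : b ∈ halfCompositions M n)
    (hc : c ∈ Fintype.piFinset fun j => range (b j + 1)) :
    (#{f : Fin n → Fin M × Fin 4 | ⇑(wordCount f) = balancedCount b c} : ℝ) =
      n.factorial * ∏ j, ((((c j).factorial * (b j - c j).factorial : ℕ) : ℝ))⁻¹ ^ 2 := by
  simp only [halfCompositions, mem_filter, Fintype.mem_piFinset, mem_range] at hb hc
  have hsum : ∑ d, balancedCount b c d = n := by
    rw [sum_prod_fin_four, ← hb.2, mul_sum]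
    refine sum_congr rfl fun j _ => ?_
    simp only [balancedCount, Matrix.cons_val_zero, Matrix.cons_val_one, Matrix.cons_val]
    have := hc j
    omega
  have hcard := card_wordCount_mul_prod_factorial hsum
  have hprod : ∏ d, (balancedCount b c d).factorial =
      ∏ j, ((c j).factorial * (b j - c j).factorial) ^ 2 := by
    simp only [Fintype.prod_prod_type, Fin.prod_univ_four, balancedCount, Matrix.cons_val_zero,
      Matrix.cons_val_one, Matrix.cons_val]
    refine prod_congr rfl fun j _ => by ring
  rw [hprod] at hcard
  rw [← hcard]
  push_cast
  simp_rw [inv_pow]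
  rw [prod_inv_distrib, mul_inv_cancel_right₀]
  positivity

lemma card_isBalanced (M n : ℕ) :
    (#{f : Fin n → Fin M × Fin 4 | IsBalanced (wordCount f)} : ℝ) = n.factorial * innerSum M n := by
  -- a balanced word is sorted by `b j = #(j, 0) + #(j, 1)` and `c j = #(j, 0)`, which pin down
  -- all its letter counts as `balancedCount b c`
  set P := (halfCompositions M n).sigma fun b => Fintype.piFinset fun j => range (b j + 1)
  let blocks (f : Fin n → Fin M × Fin 4) : Σ _ : Fin M → ℕ, Fin M → ℕ :=
    ⟨fun j => wordCount f (j, 0) + wordCount f (j, 1), fun j => wordCount f (j, 0)⟩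
  have hmaps : ∀ f ∈ ({f | IsBalanced (wordCount f)} : Finset _), blocks f ∈ P := by
    intro f hf
    replace hf : IsBalanced (wordCount f) := (mem_filter.1 hf).2
    have htotal : 2 * ∑ j, (wordCount f (j, 0) + wordCount f (j, 1)) = n := by
      conv_rhs => rw [← sum_wordCount f, sum_prod_fin_four]
      rw [mul_sum]
      exact sum_congr rfl fun j _ => by have := hf j; omega
    simp only [P, blocks, mem_sigma, halfCompositions, mem_filter, Fintype.mem_piFinset, mem_range]
    refine ⟨⟨fun j => ?_, htotal⟩, fun j => by omega⟩
    have := single_le_sum (f := fun j => wordCount f (j, 0) + wordCount f (j, 1))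
      (fun j _ => Nat.zero_le _) (mem_univ j)
    omega
  have hfiber : ∀ p ∈ P, ({f ∈ {f | IsBalanced (wordCount f)} | blocks f = p} : Finset _) =
      ({f | ⇑(wordCount f) = balancedCount p.1 p.2} : Finset (Fin n → Fin M × Fin 4)) := by
    rintro ⟨b, c⟩ hp
    have hcb : ∀ j, c j ≤ b j := fun j => by
      simpa [P, Nat.lt_succ_iff] using (Fintype.mem_piFinset.1 (mem_sigma.1 hp).2) j
    ext f
    simp only [filter_filter, mem_filter, mem_univ, true_and, blocks, Sigma.mk.injEq,
      heq_eq_eq, funext_iff]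
    constructor
    · rintro ⟨hbal, hb, hc⟩ ⟨j, i⟩
      have := hbal j
      have := hb j
      have := hc j
      fin_cases i <;> simp [balancedCount] <;> omega
    · intro h
      refine ⟨fun j => ?_, fun j => ?_, fun j => ?_⟩ <;>
        simp [h, balancedCount, Nat.add_sub_cancel' (hcb j)]
  rw [card_eq_sum_card_fiberwise hmaps, innerSum_eq_sum, mul_sum]
  simp_rw [mul_sum]
  rw [sum_sigma', Nat.cast_sum]
  refine sum_congr rfl fun p hp => ?_
  rw [hfiber p hp, card_wordCount_eq_balancedCount (mem_sigma.1 hp).1 (mem_sigma.1 hp).2]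

end Balanced

section Wave

variable {lam : ℕ → ℝ} {θ : ℕ × ℕ → ℝ}

def wave (lam : ℕ → ℝ) (θ : ℕ × ℕ → ℝ) (x : ℕ × ℕ) (i : Fin 4) : ℝ × ℝ :=
  (√(lam x.1) / (2 * π)) • zeta i (θ x)

def posDir : Fin 2 → Fin 4 := ![0, 1]

def waveFamily (lam : ℕ → ℝ) (θ : ℕ × ℕ → ℝ) (y : (ℕ × ℕ) × Fin 2) : ℝ × ℝ :=
  wave lam θ y.1 (posDir y.2)

def IsGeneric (lam : ℕ → ℝ) (θ : ℕ × ℕ → ℝ) : Prop :=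
  LinearIndependent ℤ (waveFamily lam θ)

lemma wave_eq_sign_smul (x : ℕ × ℕ) (i : Fin 4) :
    wave lam θ x i = (![1, 1, -1, -1] i : ℤ) • wave lam θ x (posDir (![0, 1, 0, 1] i)) := by
  fin_cases i
  · simp [posDir]
  · simp [posDir]
  · simp [posDir, wave, zeta]
  · simp [posDir, wave, zeta]

lemma IsGeneric.injective_wave (hθ : IsGeneric lam θ) : Injective (uncurry (wave lam θ)) := by
  rintro ⟨x, i⟩ ⟨x', i'⟩ h
  rw [uncurry_apply_pair, uncurry_apply_pair, wave_eq_sign_smul x i, wave_eq_sign_smul x' i'] at h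
  have hcomb : Finsupp.linearCombination ℤ (waveFamily lam θ)
        (Finsupp.single (x, ![0, 1, 0, 1] i) (![1, 1, -1, -1] i : ℤ)) =
      Finsupp.linearCombination ℤ (waveFamily lam θ)
        (Finsupp.single (x', ![0, 1, 0, 1] i') (![1, 1, -1, -1] i')) := by
    rw [Finsupp.linearCombination_single, Finsupp.linearCombination_single]
    exact h
  rcases Finsupp.single_eq_single_iff _ _ _ _ |>.1 (hθ hcomb) with ⟨hxy, hsign⟩ | ⟨hzero, -⟩
  · obtain ⟨rfl, hhalf⟩ := Prod.mk.inj hxy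
    revert hhalf hsign
    fin_cases i <;> fin_cases i' <;> simp
  · fin_cases i <;> simp at hzero

def balanceDefect {M : ℕ} (N : Fin M × Fin 4 → ℕ) (j : Fin M) : Fin 2 → ℤ :=
  ![(N (j, 0) : ℤ) - N (j, 2), (N (j, 1) : ℤ) - N (j, 3)]

lemma isBalanced_iff_balanceDefect_eq_zero {M : ℕ} {N : Fin M × Fin 4 → ℕ} :
    IsBalanced N ↔ ∀ j e, balanceDefect N j e = 0 := by
  simp [IsBalanced, balanceDefect, Fin.forall_fin_two, sub_eq_zero]

lemma sum_wave_eq_sum_balanceDefect_smul {M n : ℕ} (k : ℕ) (f : Fin n → Fin M × Fin 4) :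
    ∑ l, wave lam θ (k, (f l).1) (f l).2 =
      ∑ j, ∑ e, balanceDefect (wordCount f) j e • waveFamily lam θ ((k, j), e) := by
  rw [← sum_wordCount_smul f fun d => wave lam θ (k, d.1) d.2, Fintype.sum_prod_type]
  refine sum_congr rfl fun j _ => ?_
  have h2 : wave lam θ (k, j) 2 = -wave lam θ (k, j) 0 := by simp [wave, zeta]
  have h3 : wave lam θ (k, j) 3 = -wave lam θ (k, j) 1 := by simp [wave, zeta]
  simp only [Fin.sum_univ_four, Fin.sum_univ_two, balanceDefect, waveFamily, posDir, h2, h3,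
    Matrix.cons_val_zero, Matrix.cons_val_one, sub_smul, natCast_zsmul, smul_neg]
  abel

lemma IsGeneric.sum_wave_eq_zero_iff (hθ : IsGeneric lam θ) {m : ℕ → ℕ} (a : ℕ →₀ ℕ)
    (g : ∀ k, Fin (a k) → Fin (m k) × Fin 4) :
    ∑ k ∈ a.support, ∑ l, wave lam θ (k, (g k l).1) (g k l).2 = 0 ↔
      ∀ k, IsBalanced (wordCount (g k)) := by
  let emb (y : Σ k : a.support, Fin (m k) × Fin 2) : (ℕ × ℕ) × Fin 2 := ((y.1, y.2.1), y.2.2)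
  have hemb : Injective emb := by
    rintro ⟨⟨k, hk⟩, j, e⟩ ⟨⟨k', hk'⟩, j', e'⟩ h
    simp only [emb, Prod.mk.injEq] at h
    obtain ⟨⟨rfl, hj⟩, rfl⟩ := h
    rw [Fin.val_injective hj]
  have hsum : ∑ k ∈ a.support, ∑ l, wave lam θ (k, (g k l).1) (g k l).2 =
      ∑ y, balanceDefect (wordCount (g y.1)) y.2.1 y.2.2 • waveFamily lam θ (emb y) := by
    simp only [sum_wave_eq_sum_balanceDefect_smul, Fintype.sum_sigma, Fintype.sum_prod_type, emb]
    exact (sum_coe_sort a.support _).symm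
  simp only [hsum, isBalanced_iff_balanceDefect_eq_zero]
  refine ⟨fun h k j e => ?_, fun h => by simp [h]⟩
  by_cases hk : k ∈ a.support
  · exact Fintype.linearIndependent_iff.1 (hθ.comp emb hemb) _ h ⟨⟨k, hk⟩, j, e⟩
  · have : IsEmpty (Fin (a k)) := by rw [Finsupp.notMem_support_iff.1 hk]; infer_instance
    fin_cases e <;> simp [wordCount_of_isEmpty, balanceDefect]

lemma IsGeneric.ncount_eq_card (hθ : IsGeneric lam θ) (m : ℕ → ℕ) (a : ℕ →₀ ℕ) :
    Ncount lam m θ a =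
      Nat.card {g : ∀ k, Fin (a k) → Fin (m k) × Fin 4 // ∀ k, IsBalanced (wordCount (g k))} := by
  let encode (g : ∀ k, Fin (a k) → Fin (m k) × Fin 4) (k : ℕ) (l : Fin (a k)) : ℝ × ℝ :=
    wave lam θ (k, (g k l).1) (g k l).2
  have hencode : Injective encode := fun g g' h => funext fun k => funext fun l => by
    have := hθ.injective_wave (show uncurry (wave lam θ) ((k, (g k l).1), (g k l).2) =
      uncurry (wave lam θ) ((k, (g' k l).1), (g' k l).2) from congrFun (congrFun h k) l)
    simp only [Prod.mk.injEq] at this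
    exact Prod.ext (Fin.val_injective this.1.2) this.2
  have himage : {ξ : ∀ k, Fin (a k) → ℝ × ℝ | (∀ k l, ξ k l ∈ waveVectors lam m θ k) ∧
      ∑ k ∈ a.support, ∑ l, ξ k l = 0} = encode '' {g | ∀ k, IsBalanced (wordCount (g k))} := by
    ext ξ
    constructor
    · rintro ⟨hmem, hsum⟩
      simp only [waveVectors, Set.mem_ofPred_eq] at hmem
      choose j hj i hi using hmem
      have hξ : ξ = encode fun k l => (⟨j k l, hj k l⟩, i k l) := funext fun k => funext (hi k)
      refine ⟨_, (hθ.sum_wave_eq_zero_iff a _).1 ?_, hξ.symm⟩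
      rw [← hsum, hξ]
    · rintro ⟨g, hg, rfl⟩
      exact ⟨fun k l => ⟨_, (g k l).1.isLt, _, rfl⟩, (hθ.sum_wave_eq_zero_iff a g).2 hg⟩
  rw [Ncount, ← Set.coe_ofPred, himage, Nat.card_image_of_injective hencode]
  rfl

lemma IsGeneric.ncount_eq_prod (hθ : IsGeneric lam θ) (m : ℕ → ℕ) (a : ℕ →₀ ℕ) :
    (Ncount lam m θ a : ℝ) = ∏ k ∈ a.support, ((a k).factorial * innerSum (m k) (a k)) := by
  classical
  rw [hθ.ncount_eq_card, Nat.card_congr (Equiv.subtypePiEquivPi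
      (p := fun k (f : Fin (a k) → Fin (m k) × Fin 4) => IsBalanced (wordCount f))),
    Nat.card_pi_eq_prod_of_card_eq_one a.support, Nat.cast_prod]
  · refine prod_congr rfl fun k _ => ?_
    rw [← card_isBalanced, Nat.card_eq_fintype_card, Fintype.card_subtype]
  · intro k hk
    have : IsEmpty (Fin (a k)) := by rw [Finsupp.notMem_support_iff.1 hk]; infer_instance
    refine Nat.card_eq_one_iff_unique.2 ⟨inferInstance, ⟨⟨isEmptyElim, fun j => ?_⟩⟩⟩
    simp [wordCount_of_isEmpty]

end Wave

instance : IsProbabilityMeasure unif := by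
  constructor
  rw [unif, Measure.smul_apply, Measure.restrict_apply_univ, Real.volume_Icc, sub_zero, smul_eq_mul]
  exact ENNReal.inv_mul_cancel (by simp [pi_pos]) ENNReal.ofReal_ne_top

lemma unif_preimage_singleton_eq_zero {E : Type*} {φ : ℝ → E} (hφ : Set.InjOn φ (Set.Icc 0 (π / 2)))
    (c : E) : unif (φ ⁻¹' {c}) = 0 := by
  have : (φ ⁻¹' {c} ∩ Set.Icc 0 (π / 2)).Subsingleton := fun s hs t ht =>
    hφ hs.2 ht.2 (hs.1.trans ht.1.symm)
  rw [unif, Measure.smul_apply, Measure.restrict_apply' measurableSet_Icc, this.measure_zero,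
    smul_zero]

lemma IsProductUniform.map_restrict {η : Measure (ℕ × ℕ → ℝ)} (hη : IsProductUniform η)
    (T : Finset (ℕ × ℕ)) : η.map (fun θ (x : T) => θ x) = Measure.pi fun _ => unif := by
  classical
  refine (Measure.pi_eq fun B hB => ?_).symm
  let B' (x : ℕ × ℕ) : Set ℝ := if h : x ∈ T then B ⟨x, h⟩ else Set.univ
  have hB' : ∀ x, MeasurableSet (B' x) := fun x => by
    by_cases h : x ∈ T <;> simp [B', h, hB]
  have hpre : (fun (θ : ℕ × ℕ → ℝ) (x : T) => θ x) ⁻¹' Set.univ.pi B =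
      {θ | ∀ x ∈ T, θ x ∈ B' x} := by
    ext θ
    simp only [Set.mem_preimage, Set.mem_univ_pi, Subtype.forall, Set.mem_ofPred_eq]
    exact forall₂_congr fun x hx => by simp [B', hx]
  rw [Measure.map_apply (by fun_prop) (.univ_pi hB), hpre, hη.2 T B' hB', ← prod_coe_sort]
  exact prod_congr rfl fun x _ => by simp [B']

section Genericity

variable {lam : ℕ → ℝ}

@[fun_prop]
lemma continuous_zeta : ∀ i, Continuous (zeta i)
  | 0 => continuous_cos.prodMk continuous_sin
  | 1 => continuous_cos.neg.prodMk continuous_sin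
  | 2 => continuous_cos.neg.prodMk continuous_sin.neg
  | 3 => continuous_cos.prodMk continuous_sin.neg

lemma injOn_sum_smul_zeta_posDir {c : Fin 2 → ℤ} (hc : c ≠ 0) :
    Set.InjOn (fun t => ∑ e, c e • zeta (posDir e) t) (Set.Icc 0 (π / 2)) := by
  intro s hs t ht h
  simp only [Fin.sum_univ_two, posDir, zeta, Matrix.cons_val_zero, Matrix.cons_val_one,
    Prod.smul_mk, Prod.mk_add_mk, Prod.mk.injEq] at h
  simp only [zsmul_eq_mul] at h
  have hπ := pi_pos
  by_cases hc' : c 0 = c 1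
  · have h1 : (c 1 : ℝ) ≠ 0 := by
      refine Int.cast_ne_zero.2 fun h0 => hc (funext fun e => ?_)
      fin_cases e <;> simp [hc', h0]
    refine Real.injOn_sin ⟨by linarith [hs.1], hs.2⟩ ⟨by linarith [ht.1], ht.2⟩ ?_
    have := h.2
    rw [hc'] at this
    exact mul_left_cancel₀ (mul_ne_zero two_ne_zero h1) (by linarith)
  · have h1 : (c 0 : ℝ) - c 1 ≠ 0 := sub_ne_zero.2 (by exact_mod_cast hc')
    refine Real.injOn_cos ⟨hs.1, by linarith [hs.2]⟩ ⟨ht.1, by linarith [ht.2]⟩ ?_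
    exact mul_left_cancel₀ h1 (by linarith [h.1])

lemma measure_linearCombination_waveFamily_eq_zero (hpos : ∀ k, 0 < lam k)
    {η : Measure (ℕ × ℕ → ℝ)} (hη : IsProductUniform η) {l : (ℕ × ℕ) × Fin 2 →₀ ℤ}
    (hl : l ≠ 0) :
    η {θ | Finsupp.linearCombination ℤ (waveFamily lam θ) l = 0} = 0 := by
  classical
  set T := l.support.image Prod.fst
  let φ (x : T) (t : ℝ) : ℝ × ℝ := (√(lam x.1.1) / (2 * π)) • ∑ e, l (x, e) • zeta (posDir e) t
  have hrepr : ∀ θ, Finsupp.linearCombination ℤ (waveFamily lam θ) l = ∑ x : T, φ x (θ x) := by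
    intro θ
    rw [Finsupp.linearCombination_apply, Finsupp.sum_of_support_subset l
        (fun y hy => mem_product.2 ⟨mem_image_of_mem _ hy, mem_univ y.2⟩) _ (by simp),
      sum_product, ← sum_coe_sort T]
    refine sum_congr rfl fun x _ => ?_
    simp only [φ, smul_sum, waveFamily, wave]
    exact sum_congr rfl fun e _ => smul_comm _ _ _
  obtain ⟨y, hy⟩ := Finsupp.support_nonempty_iff.2 hl
  have hinj : Set.InjOn (φ ⟨y.1, mem_image_of_mem _ hy⟩) (Set.Icc 0 (π / 2)) := by
    refine (smul_right_injective _ ?_).comp_injOn (injOn_sum_smul_zeta_posDir ?_)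
    · exact (div_pos (Real.sqrt_pos.2 (hpos _)) (by positivity)).ne'
    · exact fun h => Finsupp.mem_support_iff.1 hy (congrFun h y.2)
  have hφ (x : T) : Continuous (φ x) := by fun_prop
  have hnull := Measure.pi_sum_eq_zero_null (ν := fun _ : T => unif) (φ := φ)
    (fun x => (hφ x).measurable) _ (unif_preimage_singleton_eq_zero hinj)
  rw [← hη.map_restrict] at hnull
  have hset : {θ | Finsupp.linearCombination ℤ (waveFamily lam θ) l = 0} =
      (fun θ (x : T) => θ x) ⁻¹' {z | ∑ x, φ x (z x) = 0} := by
    ext θ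
    simp [hrepr]
  rw [hset]
  exact nonpos_iff_eq_zero.1 ((Measure.le_map_apply
    (measurable_pi_lambda _ fun x => measurable_pi_apply _).aemeasurable _).trans_eq hnull)

lemma ae_isGeneric (hpos : ∀ k, 0 < lam k) {η : Measure (ℕ × ℕ → ℝ)} (hη : IsProductUniform η) :
    ∀ᵐ θ ∂η, IsGeneric lam θ := by
  have : ∀ l, ∀ᵐ θ ∂η, Finsupp.linearCombination ℤ (waveFamily lam θ) l = 0 → l = 0 := by
    intro l
    rcases eq_or_ne l 0 with rfl | hl
    · exact Eventually.of_forall fun _ _ => rfl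
    · exact (measure_eq_zero_iff_ae_notMem.1
        (measure_linearCombination_waveFamily_eq_zero hpos hη hl)).mono fun θ h h0 => (h h0).elim
  exact (ae_all_iff.2 this).mono fun θ h => linearIndependent_iff.2 h

end Genericity

theorem statement_3_general (lam : ℕ → ℝ) (hpos : ∀ k, 0 < lam k)
    (m : ℕ → ℕ)
    (η : Measure (ℕ × ℕ → ℝ)) (hη : IsProductUniform η)
    (μ : Measure (ℕ × ℕ → ℝ)) (hac : μ ≪ η) :
    ∀ᵐ θ ∂μ, ∀ a : ℕ →₀ ℕ,
      ((Ncount lam m θ a : ℝ) =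
        ((a.prod fun _ e => e.factorial : ℕ) : ℝ) * a.prod fun k n => innerSum (m k) n) ∧
      (∀ k, Odd (a k) → Ncount lam m θ a = 0) := by
  filter_upwards [hac.ae_le (ae_isGeneric hpos hη)] with θ hθ a
  have hN := hθ.ncount_eq_prod m a
  refine ⟨by rw [hN, Finsupp.prod, Finsupp.prod, Nat.cast_prod, prod_mul_distrib], fun k hk => ?_⟩
  have hka : k ∈ a.support := Finsupp.mem_support_iff.2 fun h => by simp [h] at hk
  exact_mod_cast hN.trans (prod_eq_zero hka (by rw [innerSum_of_odd hk, mul_zero]))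

theorem statement_3 (lam : ℕ → ℝ) (hmono : StrictMono lam) (hpos : ∀ k, 0 < lam k)
    (m : ℕ → ℕ) (hm : ∀ k, 1 ≤ m k)
    (η : Measure (ℕ × ℕ → ℝ)) (hη : IsProductUniform η)
    (μ : Measure (ℕ × ℕ → ℝ)) (hprob : IsProbabilityMeasure μ) (hac : μ ≪ η) :
    ∀ᵐ θ ∂μ, ∀ a : ℕ →₀ ℕ,
      ((Ncount lam m θ a : ℝ) =
        ((a.prod fun _ e => e.factorial : ℕ) : ℝ) * a.prod fun k n => innerSum (m k) n) ∧
      (∀ k, Odd (a k) → Ncount lam m θ a = 0) :=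
  statement_3_general lam hpos m η hη μ hac

end Stmt3
end
end

section
/- For every integer p ≥ 1, the following identities hold in the polynomial ring ℝ[X₁,…,X_p]: Q_p(P₁(X₁), P₂(X₁,X₂), …, P_p(X₁,…,X_p)) = X_p and P_p(Q₁(X₁), Q₂(X₁,X₂), …, Q_p(X₁,…,X_p)) = X_p. -/
/-!
Write `ogf x = ∑_{q ≥ 1} x_q X^q`. By the multinomial theorem, the coefficient of `X^n` in
`a(f)`, for a power series `f` without constant term, is the sum over partitions `α` of `n`
of `a_{‖α‖} (‖α‖!/α!) ∏_q f_q^{α_q}`. Hence `P_n(x) = (-1)^n n! [X^n] exp(-ogf x)` and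
`Q_n(x) = (-1)^(n+1) [X^n] log(1 + ogf (x_q / q!))`, and after the sign change `X ↦ -X` the two
identities become `log (exp g) = g` and `exp (log (1 + g)) = 1 + g`. The first follows from
`log ∘ (exp - 1) = X`, which holds because both sides have derivative `1`; the second then
holds because a one-sided compositional inverse of `log(1 + X)` is two-sided.
-/

noncomputable section

namespace Stmt8

/-- The set `𝒫(p)` of partitions of `p`, encoded as finitely supported functions
`α : ℕ →₀ ℕ` with `α 0 = 0` and `Σ_k k·α_k = p` (`α_k` is the number of parts equal to `k`). -/
def partitions (p : ℕ) : Set (ℕ →₀ ℕ) :=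
  {α | α 0 = 0 ∧ (α.sum fun k e => k * e) = p}

/-- `‖α‖ = Σ_k α_k`, the number of parts. -/
def pnorm (α : ℕ →₀ ℕ) : ℕ := α.sum fun _ e => e

/-- `α! = ∏_k α_k!`. -/
def pfact (α : ℕ →₀ ℕ) : ℕ := α.prod fun _ e => e.factorial

/-- The polynomial (function) `P_p(X₁,…,X_p) = Σ_{α∈𝒫(p)} (−1)^{p−‖α‖} (p!/α!) ∏_q X_q^{α_q}`. -/
def Pfun (p : ℕ) (x : ℕ → ℝ) : ℝ :=
  ∑' α : partitions p,
    (-1 : ℝ) ^ (p - pnorm α.1) * ((p.factorial : ℝ) / (pfact α.1 : ℝ)) *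
      α.1.prod fun q e => x q ^ e

/-- The polynomial (function)
`Q_p(X₁,…,X_p) = Σ_{α∈𝒫(p)} ((−1)^{p−‖α‖}/‖α‖) (‖α‖!/α!) ∏_q (X_q/q!)^{α_q}`. -/
def Qfun (p : ℕ) (x : ℕ → ℝ) : ℝ :=
  ∑' α : partitions p,
    (-1 : ℝ) ^ (p - pnorm α.1) / (pnorm α.1 : ℝ) *
      (((pnorm α.1).factorial : ℝ) / (pfact α.1 : ℝ)) *
      α.1.prod fun q e => (x q / (q.factorial : ℝ)) ^ e

/-- `A_p = Q_p(1, 1/2!, …, 1/p!)`. -/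
def Acoef (p : ℕ) : ℝ := Qfun p fun q => ((q.factorial : ℝ))⁻¹

end Stmt8

open Finset

theorem Finset.sum_pow_eq_sum_finsuppAntidiag {ι R : Type*} [DecidableEq ι] [CommSemiring R]
    (s : Finset ι) (f : ι → R) (m : ℕ) :
    (∑ i ∈ s, f i) ^ m =
      ∑ k ∈ s.finsuppAntidiag m, k.multinomial * k.prod fun i e => f i ^ e := by
  rw [sum_pow_eq_sum_piAntidiag, finsuppAntidiag, sum_map, ← sum_attach]
  refine sum_congr rfl fun k _ => ?_
  set k' : ι →₀ ℕ := ⟨s.filter (k.1 · ≠ 0), k.1, by simpa using (mem_piAntidiag.1 k.2).2⟩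
  have hk : k'.support ⊆ s := filter_subset _ _
  show _ = (k'.multinomial : R) * k'.prod fun i e => f i ^ e
  rw [Finsupp.multinomial_eq_of_support_subset hk, Finsupp.prod_of_support_subset _ hk _ (by simp)]
  rfl

namespace PowerSeries

variable {R : Type*} [CommRing R]

theorem coeff_subst_eq_sum_range (a : R⟦X⟧) {f : R⟦X⟧} (hf : constantCoeff f = 0) (n : ℕ) :
    coeff n (subst f a) = ∑ m ∈ range (n + 1), coeff m a * coeff n (f ^ m) := by
  rw [coeff_subst' (HasSubst.of_constantCoeff_zero' hf)]
  refine finsum_eq_sum_of_support_subset _ fun m hm => ?_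
  by_contra hmn
  have hdvd : X ^ m ∣ f ^ m := pow_dvd_pow_of_dvd (X_dvd_iff.mpr hf) m
  exact hm (by simp only [X_pow_dvd_iff.mp hdvd n (by simpa using hmn), smul_zero])

theorem constantCoeff_subst_of_constantCoeff_eq_zero (a : R⟦X⟧) {f : R⟦X⟧}
    (hf : constantCoeff f = 0) : constantCoeff (subst f a) = constantCoeff a := by
  rw [← coeff_zero_eq_constantCoeff_apply, coeff_subst_eq_sum_range a hf]
  simp

theorem constantCoeff_rescale (r : R) (f : R⟦X⟧) :
    constantCoeff (rescale r f) = constantCoeff f := by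
  rw [← coeff_zero_eq_constantCoeff_apply, coeff_rescale, pow_zero, one_mul,
    coeff_zero_eq_constantCoeff_apply]

theorem rescale_subst (r : R) (a : R⟦X⟧) {f : R⟦X⟧} (hf : constantCoeff f = 0) :
    rescale r (subst f a) = subst (rescale r f) a := by
  rw [rescale_eq_subst, rescale_eq_subst,
    subst_comp_subst_apply (HasSubst.of_constantCoeff_zero' hf) (HasSubst.smul_X' r)]

theorem subst_eq_X_of_subst_eq_X {P Q : R⟦X⟧} (hP : constantCoeff P = 0) (hQ : constantCoeff Q = 0)
    (hP₁ : IsUnit (coeff 1 P)) (h : subst Q P = X) : subst P Q = X := by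
  have hQS : Q = P.substInvOfIsUnit hP₁ := by
    calc Q = subst Q (subst P (P.substInvOfIsUnit hP₁)) := by
          rw [subst_substInvOfIsUnit_left P hP hP₁, subst_X (HasSubst.of_constantCoeff_zero' hQ)]
      _ = P.substInvOfIsUnit hP₁ := by
          rw [subst_comp_subst_apply (HasSubst.of_constantCoeff_zero' hP)
            (HasSubst.of_constantCoeff_zero' hQ), h, X_subst]
  rw [hQS, subst_substInvOfIsUnit_left P hP hP₁]

section ExpLog

variable [Algebra ℚ R]

theorem derivative_log_mul_one_add_X : d⁄dX R (log R) * (1 + X) = 1 := by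
  ext n
  rw [deriv_log, mul_add, mul_one, map_add]
  cases n with
  | zero => simp
  | succ n => simp [coeff_succ_mul_X, pow_succ]

variable [IsAddTorsionFree R]

theorem log_subst_exp_sub_one : subst (exp R - 1) (log R) = X := by
  have hE : HasSubst (exp R - 1) := HasSubst.exp_sub_one
  refine derivative.ext ?_ ?_
  · have := congrArg (substAlgHom hE) (derivative_log_mul_one_add_X (R := R))
    rw [map_mul, map_add, map_one, substAlgHom_X, add_sub_cancel, coe_substAlgHom] at this
    rw [derivative_subst hE, map_sub, derivative_exp, Derivation.map_one_eq_zero, sub_zero,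
      derivative_X, this]
  · rw [← logOf_eq, constantCoeff_logOf constantCoeff_exp, constantCoeff_X]

theorem exp_subst_log : subst (log R) (exp R) = 1 + X := by
  have h := subst_eq_X_of_subst_eq_X constantCoeff_log (by simp) (by simp)
    (log_subst_exp_sub_one (R := R))
  rw [← coe_substAlgHom HasSubst.log, map_sub, map_one] at h
  rw [← coe_substAlgHom HasSubst.log, ← h]
  ring

theorem log_subst_exp_subst_sub_one {g : R⟦X⟧} (hg : constantCoeff g = 0) :
    subst (subst g (exp R) - 1) (log R) = g := by
  have hgs := HasSubst.of_constantCoeff_zero' hg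
  have : subst g (exp R) - 1 = subst g (exp R - 1) := by
    rw [← coe_substAlgHom hgs, map_sub, map_one]
  rw [this, ← subst_comp_subst_apply HasSubst.exp_sub_one hgs, log_subst_exp_sub_one,
    subst_X hgs]

theorem exp_subst_log_subst {g : R⟦X⟧} (hg : constantCoeff g = 0) :
    subst (subst g (log R)) (exp R) = 1 + g := by
  have hgs := HasSubst.of_constantCoeff_zero' hg
  rw [← subst_comp_subst_apply HasSubst.log hgs, exp_subst_log, ← coe_substAlgHom hgs,
    map_add, map_one, substAlgHom_X]

end ExpLog

theorem coeff_log_eq_div {K : Type*} [Field K] [CharZero K] (k : ℕ) :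
    coeff k (log K) = (-1) ^ (k + 1) / k := by
  rcases k with _ | k <;> simp

end PowerSeries

namespace Stmt8

open PowerSeries

def partitionsOfLength (n m : ℕ) : Finset (ℕ →₀ ℕ) :=
  ((Icc 1 n).finsuppAntidiag m).filter fun α => (α.sum fun k e => k * e) = n

def partitionsFinset (n : ℕ) : Finset (ℕ →₀ ℕ) :=
  (range (n + 1)).biUnion (partitionsOfLength n)

theorem mem_partitionsOfLength {n m : ℕ} {α : ℕ →₀ ℕ} :
    α ∈ partitionsOfLength n m ↔
      (pnorm α = m ∧ α.support ⊆ Icc 1 n) ∧ (α.sum fun k e => k * e) = n := by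
  rw [partitionsOfLength, mem_filter, mem_finsuppAntidiag']
  rfl

theorem pnorm_le_weight {α : ℕ →₀ ℕ} (h0 : α 0 = 0) : pnorm α ≤ α.sum fun k e => k * e :=
  Finset.sum_le_sum fun k hk =>
    Nat.le_mul_of_pos_left _ (Nat.pos_of_ne_zero fun h => by simp_all)

theorem support_subset_Icc_weight {α : ℕ →₀ ℕ} (h0 : α 0 = 0) :
    α.support ⊆ Icc 1 (α.sum fun k e => k * e) := fun k hk => by
  have hk0 : k ≠ 0 := fun h => by simp_all
  have hαk : α k ≠ 0 := Finsupp.mem_support_iff.mp hk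
  have : k * α k ≤ α.sum fun k e => k * e :=
    Finset.single_le_sum (f := fun i => i * α i) (fun _ _ => Nat.zero_le _) hk
  exact mem_Icc.mpr ⟨Nat.one_le_iff_ne_zero.mpr hk0,
    (Nat.le_mul_of_pos_right _ (Nat.pos_of_ne_zero hαk)).trans this⟩

theorem coe_partitionsFinset (n : ℕ) : (partitionsFinset n : Set (ℕ →₀ ℕ)) = partitions n := by
  ext α
  simp only [partitionsFinset, coe_biUnion, coe_range, Set.mem_iUnion, Set.mem_Iio, mem_coe,
    mem_partitionsOfLength, exists_prop, partitions, Set.mem_ofPred_eq]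
  constructor
  · rintro ⟨m, -, ⟨-, hsupp⟩, hw⟩
    exact ⟨Finsupp.notMem_support_iff.mp fun h => by simpa using hsupp h, hw⟩
  · rintro ⟨h0, hw⟩
    exact ⟨pnorm α, Nat.lt_succ_of_le (hw ▸ pnorm_le_weight h0),
      ⟨rfl, hw ▸ support_subset_Icc_weight h0⟩, hw⟩

theorem mem_partitionsFinset {n : ℕ} {α : ℕ →₀ ℕ} :
    α ∈ partitionsFinset n ↔ α ∈ partitions n := by
  rw [← mem_coe, coe_partitionsFinset]

theorem pnorm_le_of_mem_partitions {n : ℕ} {α : ℕ →₀ ℕ} (hα : α ∈ partitions n) :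
    pnorm α ≤ n :=
  hα.2 ▸ pnorm_le_weight hα.1

theorem tsum_partitions_eq_sum {M : Type*} [AddCommMonoid M] [TopologicalSpace M] (n : ℕ)
    (g : (ℕ →₀ ℕ) → M) : ∑' α : partitions n, g α = ∑ α ∈ partitionsFinset n, g α := by
  rw [← coe_partitionsFinset]
  exact Finset.tsum_subtype _ g

variable {R : Type*} [CommRing R]

theorem coeff_pow_eq_sum_partitionsOfLength {f : R⟦X⟧} (hf : constantCoeff f = 0) (n m : ℕ) :
    coeff n (f ^ m) =
      ∑ α ∈ partitionsOfLength n m, α.multinomial * α.prod fun q e => coeff q f ^ e := by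
  set g : R⟦X⟧ := ∑ q ∈ Icc 1 n, C (coeff q f) * X ^ q
  have hfg : X ^ (n + 1) ∣ f - g := X_pow_dvd_iff.mpr fun i hi => by
    simp only [g, map_sub, map_sum, coeff_C_mul_X_pow, sum_ite_eq, mem_Icc]
    rcases Nat.eq_zero_or_pos i with rfl | hi0
    · simp [hf]
    · simp [Nat.one_le_iff_ne_zero.mpr hi0.ne', Nat.le_of_lt_succ hi]
  have hfg' : coeff n (f ^ m) = coeff n (g ^ m) := by
    rw [← sub_eq_zero, ← map_sub]
    exact X_pow_dvd_iff.mp (hfg.trans (sub_dvd_pow_sub_pow f g m)) n n.lt_succ_self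
  rw [hfg', sum_pow_eq_sum_finsuppAntidiag, map_sum, partitionsOfLength, sum_filter]
  refine sum_congr rfl fun α _ => ?_
  have hprod : (α.prod fun q e => (C (coeff q f) * X ^ q) ^ e) =
      C (α.prod fun q e => coeff q f ^ e) * X ^ (α.sum fun q e => q * e) := by
    simp only [Finsupp.prod, Finsupp.sum, mul_pow, ← map_pow, ← pow_mul, prod_mul_distrib,
      map_prod, prod_pow_eq_pow_sum]
  rw [hprod, ← map_natCast (C (R := R)), ← mul_assoc, ← map_mul, coeff_C_mul_X_pow]
  simp only [eq_comm]

theorem coeff_subst_eq_sum_partitionsFinset (a : R⟦X⟧) {f : R⟦X⟧} (hf : constantCoeff f = 0)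
    (n : ℕ) : coeff n (subst f a) = ∑ α ∈ partitionsFinset n,
      coeff (pnorm α) a * α.multinomial * α.prod fun q e => coeff q f ^ e := by
  have hdisj : (range (n + 1) : Set ℕ).PairwiseDisjoint (partitionsOfLength n) :=
    fun m _ m' _ hmm' => disjoint_left.mpr fun α hα hα' =>
      hmm' ((mem_partitionsOfLength.mp hα).1.1.symm.trans (mem_partitionsOfLength.mp hα').1.1)
  rw [coeff_subst_eq_sum_range a hf, partitionsFinset, sum_biUnion hdisj]
  refine sum_congr rfl fun m _ => ?_
  rw [coeff_pow_eq_sum_partitionsOfLength hf, mul_sum]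
  refine sum_congr rfl fun α hα => ?_
  rw [(mem_partitionsOfLength.mp hα).1.1, mul_assoc]

def ogf (x : ℕ → R) : R⟦X⟧ := mk fun q => if q = 0 then 0 else x q

theorem coeff_ogf_of_ne_zero (x : ℕ → R) {q : ℕ} (hq : q ≠ 0) : coeff q (ogf x) = x q := by
  rw [ogf, coeff_mk, if_neg hq]

theorem constantCoeff_ogf (x : ℕ → R) : constantCoeff (ogf x) = 0 := by
  rw [← coeff_zero_eq_constantCoeff_apply, ogf, coeff_mk, if_pos rfl]

theorem prod_coeff_ogf {α : ℕ →₀ ℕ} (h0 : α 0 = 0) (x : ℕ → R) :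
    (α.prod fun q e => coeff q (ogf x) ^ e) = α.prod fun q e => x q ^ e :=
  Finsupp.prod_congr fun q hq => by
    rw [coeff_ogf_of_ne_zero x fun h => Finsupp.mem_support_iff.mp hq (h ▸ h0)]

theorem prod_neg_pow (α : ℕ →₀ ℕ) (y : ℕ → R) :
    (α.prod fun q e => (-y q) ^ e) = (-1) ^ pnorm α * α.prod fun q e => y q ^ e := by
  rw [pnorm, Finsupp.sum, ← prod_pow_eq_pow_sum, ← Finsupp.prod, ← Finsupp.prod_mul]
  exact Finsupp.prod_congr fun q _ => neg_pow (y q) _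

theorem neg_one_pow_sub_of_le {n k : ℕ} (h : k ≤ n) :
    (-1 : R) ^ (n - k) = (-1) ^ n * (-1) ^ k := by
  obtain ⟨j, rfl⟩ := Nat.exists_eq_add_of_le h
  rw [Nat.add_sub_cancel_left, pow_add, mul_right_comm, ← pow_add, ← two_mul, pow_mul,
    neg_one_sq, one_pow, one_mul]

theorem multinomial_eq_div {K : Type*} [Field K] [CharZero K] (α : ℕ →₀ ℕ) :
    (α.multinomial : K) = ((pnorm α).factorial : K) / pfact α := by
  have hspec : pfact α * α.multinomial = (pnorm α).factorial := Nat.multinomial_spec α.support α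
  have hpfact : (pfact α : K) ≠ 0 :=
    Nat.cast_ne_zero.mpr (Finset.prod_ne_zero_iff.mpr fun _ _ => Nat.factorial_ne_zero _)
  rw [eq_div_iff hpfact, mul_comm, ← Nat.cast_mul, hspec]

theorem Pfun_eq_coeff (n : ℕ) (x : ℕ → ℝ) :
    Pfun n x = (-1) ^ n * n.factorial * coeff n (subst (-ogf x) (exp ℝ)) := by
  have hsum := tsum_partitions_eq_sum n fun α =>
    (-1 : ℝ) ^ (n - pnorm α) * ((n.factorial : ℝ) / pfact α) * α.prod fun q e => x q ^ e
  have hg : constantCoeff (-ogf x) = 0 := by rw [map_neg, constantCoeff_ogf, neg_zero]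
  rw [Pfun, hsum, coeff_subst_eq_sum_partitionsFinset _ hg, mul_sum]
  refine sum_congr rfl fun α hα => ?_
  replace hα := mem_partitionsFinset.mp hα
  simp only [map_neg]
  rw [prod_neg_pow, prod_coeff_ogf hα.1, coeff_exp, map_div₀, map_one, map_natCast,
    multinomial_eq_div, neg_one_pow_sub_of_le (pnorm_le_of_mem_partitions hα)]
  have : ((pnorm α).factorial : ℝ) ≠ 0 := Nat.cast_ne_zero.mpr (Nat.factorial_ne_zero _)
  field_simp

theorem Qfun_eq_coeff (n : ℕ) (x : ℕ → ℝ) :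
    Qfun n x = (-1) ^ (n + 1) * coeff n (subst (ogf fun q => x q / q.factorial) (log ℝ)) := by
  have hsum := tsum_partitions_eq_sum n fun α =>
    (-1 : ℝ) ^ (n - pnorm α) / pnorm α * (((pnorm α).factorial : ℝ) / pfact α) *
      α.prod fun q e => (x q / q.factorial) ^ e
  rw [Qfun, hsum, coeff_subst_eq_sum_partitionsFinset _ (constantCoeff_ogf _), mul_sum]
  refine sum_congr rfl fun α hα => ?_
  replace hα := mem_partitionsFinset.mp hα
  rw [prod_coeff_ogf hα.1, coeff_log_eq_div, multinomial_eq_div,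
    neg_one_pow_sub_of_le (pnorm_le_of_mem_partitions hα)]
  ring

theorem Qfun_Pfun {p : ℕ} (hp : 1 ≤ p) (x : ℕ → ℝ) : Qfun p (fun q => Pfun q x) = x p := by
  have hg : constantCoeff (-ogf x) = 0 := by rw [map_neg, constantCoeff_ogf, neg_zero]
  have hE : ogf (fun q => Pfun q x / q.factorial) = rescale (-1) (subst (-ogf x) (exp ℝ)) - 1 := by
    ext q
    rcases Nat.eq_zero_or_pos q with rfl | hq
    · simp [constantCoeff_ogf, constantCoeff_rescale,
        constantCoeff_subst_of_constantCoeff_eq_zero _ hg]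
    · rw [coeff_ogf_of_ne_zero _ hq.ne', Pfun_eq_coeff, map_sub, coeff_rescale, coeff_one,
        if_neg hq.ne', sub_zero]
      field_simp
  rw [Qfun_eq_coeff, hE, rescale_subst _ _ hg,
    log_subst_exp_subst_sub_one (by rw [constantCoeff_rescale, hg]), coeff_rescale, map_neg,
    coeff_ogf_of_ne_zero _ (by omega)]
  rcases neg_one_pow_eq_or ℝ p with h | h <;> simp [h, pow_succ]

theorem Pfun_Qfun {p : ℕ} (hp : 1 ≤ p) (x : ℕ → ℝ) : Pfun p (fun q => Qfun q x) = x p := by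
  have hg := constantCoeff_ogf fun q => x q / q.factorial
  set L := subst (ogf fun q => x q / q.factorial) (log ℝ)
  have hL0 : constantCoeff L = 0 := by
    rw [constantCoeff_subst_of_constantCoeff_eq_zero _ hg, constantCoeff_log]
  have hL : -ogf (fun q => Qfun q x) = rescale (-1) L := by
    ext q
    rcases Nat.eq_zero_or_pos q with rfl | hq
    · simp [constantCoeff_ogf, hL0]
    · rw [map_neg, coeff_ogf_of_ne_zero _ hq.ne', Qfun_eq_coeff, coeff_rescale]
      ring
  rw [Pfun_eq_coeff, hL, ← rescale_subst _ _ hL0, exp_subst_log_subst hg, coeff_rescale, map_add,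
    coeff_one, if_neg (by omega), coeff_ogf_of_ne_zero _ (by omega)]
  field_simp
  rcases neg_one_pow_eq_or ℝ p with h | h <;> simp [h, pow_succ]

/-- `Q_p(P₁(X₁),…,P_p(X₁,…,X_p)) = X_p` and `P_p(Q₁(X₁),…,Q_p(X₁,…,X_p)) = X_p`,
stated as identities of the associated polynomial functions on `ℝ` (which is equivalent to
the identities in the polynomial ring `ℝ[X₁,…,X_p]`, since `ℝ` is infinite). -/
theorem statement_8 (p : ℕ) (hp : 1 ≤ p) (x : ℕ → ℝ) :
    Qfun p (fun q => Pfun q x) = x p ∧ Pfun p (fun q => Qfun q x) = x p :=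
  ⟨Qfun_Pfun hp x, Pfun_Qfun hp x⟩

end Stmt8
end
end

section
/- For every integer p ≥ 2, the polynomial map Φ_p : ℝ^p → ℝ^p, (x₁,…,x_p) ↦ (P₁(x₁), P₂(x₁,x₂), …, P_p(x₁,…,x_p)), is a C^∞ diffeomorphism of ℝ^p onto itself whose inverse is the polynomial map Ψ_p : (x₁,…,x_p) ↦ (Q₁(x₁), Q₂(x₁,x₂), …, Q_p(x₁,…,x_p)); moreover, for every x ∈ ℝ^p the absolute value of the Jacobian determinant of Φ_p at x equals ∏_{q=1}^p q!. -/
/-!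
With `w_q = (-1)^(q+1) x_q` and `g_q = y_q / q!`, the multinomial theorem gives
`P_p(x) = p! [t^p] exp (∑ w_q t^q)` and `Q_p(y) = (-1)^(p+1) [t^p] log (1 + ∑ g_q t^q)`, so
`Φ_p` and `Ψ_p` are inverse to each other because `exp` and `log` are. Instead of composing power
series, both inversion identities are read off the logarithmic derivatives `(exp W)' = W' exp W`
and `(log G)' = G' G⁻¹`; on coefficients these are recursions obtained by removing one part from a
partition, and solutions of `F' = V F` with `F(0) = 1` are unique.
The `q`-th component of `Φ_p` is `(-1)^(q+1) q! x_q` plus a polynomial in `x_1, …, x_(q-1)`, so the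
Jacobian matrix is lower triangular.
-/

noncomputable section

namespace Stmt9

/-- The set `𝒫(p)` of partitions of `p`, encoded as finitely supported functions
`α : ℕ →₀ ℕ` with `α 0 = 0` and `Σ_k k·α_k = p` (`α_k` is the number of parts equal to `k`). -/
def partitions (p : ℕ) : Set (ℕ →₀ ℕ) :=
  {α | α 0 = 0 ∧ (α.sum fun k e => k * e) = p}

/-- `‖α‖ = Σ_k α_k`, the number of parts. -/
def pnorm (α : ℕ →₀ ℕ) : ℕ := α.sum fun _ e => e

/-- `α! = ∏_k α_k!`. -/
def pfact (α : ℕ →₀ ℕ) : ℕ := α.prod fun _ e => e.factorial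

/-- The polynomial (function) `P_p(X₁,…,X_p) = Σ_{α∈𝒫(p)} (−1)^{p−‖α‖} (p!/α!) ∏_q X_q^{α_q}`. -/
def Pfun (p : ℕ) (x : ℕ → ℝ) : ℝ :=
  ∑' α : partitions p,
    (-1 : ℝ) ^ (p - pnorm α.1) * ((p.factorial : ℝ) / (pfact α.1 : ℝ)) *
      α.1.prod fun q e => x q ^ e

/-- The polynomial (function)
`Q_p(X₁,…,X_p) = Σ_{α∈𝒫(p)} ((−1)^{p−‖α‖}/‖α‖) (‖α‖!/α!) ∏_q (X_q/q!)^{α_q}`. -/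
def Qfun (p : ℕ) (x : ℕ → ℝ) : ℝ :=
  ∑' α : partitions p,
    (-1 : ℝ) ^ (p - pnorm α.1) / (pnorm α.1 : ℝ) *
      (((pnorm α.1).factorial : ℝ) / (pfact α.1 : ℝ)) *
      α.1.prod fun q e => (x q / (q.factorial : ℝ)) ^ e

/-- `A_p = Q_p(1, 1/2!, …, 1/p!)`. -/
def Acoef (p : ℕ) : ℝ := Qfun p fun q => ((q.factorial : ℝ))⁻¹

/-- Extend `x = (x₁,…,x_p) ∈ ℝ^p` to a sequence indexed by `ℕ`, with `x_j` in position `j`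
for `1 ≤ j ≤ p` and `0` elsewhere. -/
def extVec (p : ℕ) (x : Fin p → ℝ) : ℕ → ℝ := fun j =>
  if h : 1 ≤ j ∧ j ≤ p then x ⟨j - 1, by omega⟩ else 0

/-- `Φ_p : (x₁,…,x_p) ↦ (P₁(x₁), P₂(x₁,x₂), …, P_p(x₁,…,x_p))`. -/
def Phi (p : ℕ) (x : Fin p → ℝ) : Fin p → ℝ := fun q => Pfun (q.1 + 1) (extVec p x)

/-- `Ψ_p : (x₁,…,x_p) ↦ (Q₁(x₁), Q₂(x₁,x₂), …, Q_p(x₁,…,x_p))`. -/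
def Psi (p : ℕ) (x : Fin p → ℝ) : Fin p → ℝ := fun q => Qfun (q.1 + 1) (extVec p x)

open Finset

lemma one_le_and_mul_le_of_mem_support {p j : ℕ} {α : ℕ →₀ ℕ} (hα : α ∈ partitions p)
    (hj : j ∈ α.support) : 1 ≤ j ∧ j * α j ≤ p := by
  have hj0 : j ≠ 0 := by rintro rfl; exact Finsupp.mem_support_iff.1 hj hα.1
  exact ⟨Nat.one_le_iff_ne_zero.2 hj0,
    hα.2 ▸ Finset.single_le_sum (f := fun k => k * α k) (fun _ _ => Nat.zero_le _) hj⟩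

lemma le_of_mem_support {p j : ℕ} {α : ℕ →₀ ℕ} (hα : α ∈ partitions p)
    (hj : j ∈ α.support) : j ≤ p ∧ α j ≤ p := by
  obtain ⟨h1, h2⟩ := one_le_and_mul_le_of_mem_support hα hj
  have h3 := Nat.pos_of_ne_zero (Finsupp.mem_support_iff.1 hj)
  exact ⟨(Nat.le_mul_of_pos_right j h3).trans h2, (Nat.le_mul_of_pos_left _ h1).trans h2⟩

lemma partitions_finite (p : ℕ) : (partitions p).Finite := by
  refine ((range (p + 1)).finsupp fun _ => range (p + 1)).finite_toSet.subset fun α hα => ?_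
  rw [mem_coe, mem_finsupp_iff]
  refine ⟨fun j hj => mem_range.2 (Nat.lt_succ_of_le (le_of_mem_support hα hj).1), fun j _ => ?_⟩
  by_cases hj : j ∈ α.support
  · exact mem_range.2 (Nat.lt_succ_of_le (le_of_mem_support hα hj).2)
  · simp [Finsupp.notMem_support_iff.1 hj]

def partitionFinset (p : ℕ) : Finset (ℕ →₀ ℕ) := (partitions_finite p).toFinset

@[simp]
lemma mem_partitionFinset {p : ℕ} {α : ℕ →₀ ℕ} : α ∈ partitionFinset p ↔ α ∈ partitions p :=
  Set.Finite.mem_toFinset _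

lemma tsum_partitions {M : Type*} [AddCommMonoid M] [TopologicalSpace M] (p : ℕ)
    (f : (ℕ →₀ ℕ) → M) : ∑' α : partitions p, f α = ∑ α ∈ partitionFinset p, f α := by
  rw [← Finset.tsum_subtype]
  exact tsum_congr_set_coe f (Set.Finite.coe_toFinset _).symm

lemma support_subset_Icc {p : ℕ} {α : ℕ →₀ ℕ} (hα : α ∈ partitions p) :
    α.support ⊆ Icc 1 p := fun _ hj =>
  mem_Icc.2 ⟨(one_le_and_mul_le_of_mem_support hα hj).1, (le_of_mem_support hα hj).1⟩

lemma pnorm_le {p : ℕ} {α : ℕ →₀ ℕ} (hα : α ∈ partitions p) : pnorm α ≤ p :=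
  hα.2 ▸ Finset.sum_le_sum fun _ hj =>
    Nat.le_mul_of_pos_left _ (one_le_and_mul_le_of_mem_support hα hj).1

lemma pnorm_pos {p : ℕ} (hp : p ≠ 0) {α : ℕ →₀ ℕ} (hα : α ∈ partitions p) : 0 < pnorm α := by
  obtain ⟨j, hj⟩ : α.support.Nonempty := by
    rw [Finsupp.support_nonempty_iff]
    rintro rfl
    exact hp (by simpa using hα.2.symm)
  exact (Nat.pos_of_ne_zero (Finsupp.mem_support_iff.1 hj)).trans_le
    (Finset.single_le_sum (f := fun k => α k) (fun _ _ => Nat.zero_le _) hj)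

lemma partitionFinset_zero : partitionFinset 0 = {0} := by
  ext α
  simp only [mem_partitionFinset, mem_singleton]
  refine ⟨fun hα => ?_, fun h => ⟨by simp [h], by simp [h]⟩⟩
  refine Finsupp.support_eq_empty.1 (eq_empty_of_forall_notMem fun j hj => ?_)
  have := one_le_and_mul_le_of_mem_support hα hj
  have := Nat.pos_of_ne_zero (Finsupp.mem_support_iff.1 hj)
  nlinarith

lemma sum_mul_add_single (β : ℕ →₀ ℕ) (j : ℕ) :
    ((β + Finsupp.single j 1).sum fun k e => k * e) = (β.sum fun k e => k * e) + j := by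
  rw [Finsupp.sum_add_index' (fun _ => Nat.mul_zero _) fun _ _ _ => Nat.mul_add _ _ _,
    Finsupp.sum_single_index (Nat.mul_zero j), Nat.mul_one]

lemma add_single_mem_partitions {p j : ℕ} (hj : j ∈ Icc 1 p) {β : ℕ →₀ ℕ}
    (hβ : β ∈ partitions (p - j)) : β + Finsupp.single j 1 ∈ partitions p := by
  rw [mem_Icc] at hj
  refine ⟨?_, ?_⟩
  · simp [hβ.1, show j ≠ 0 by omega]
  · rw [sum_mul_add_single, hβ.2]; omega

lemma sub_single_mem_partitions {p j : ℕ} {α : ℕ →₀ ℕ} (hα : α ∈ partitions p)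
    (hj : j ∈ α.support) : α - Finsupp.single j 1 ∈ partitions (p - j) := by
  have hle : Finsupp.single j 1 ≤ α :=
    Finsupp.single_le_iff.2 (Nat.one_le_iff_ne_zero.2 (Finsupp.mem_support_iff.1 hj))
  have hsum := sum_mul_add_single (α - Finsupp.single j 1) j
  rw [tsub_add_cancel_of_le hle, hα.2] at hsum
  refine ⟨?_, by omega⟩
  rw [Finsupp.tsub_apply, hα.1, Nat.zero_sub]

lemma sum_partitionFinset_add_single {M : Type*} [AddCommMonoid M] {p j : ℕ} (hj : j ∈ Icc 1 p)
    (f : (ℕ →₀ ℕ) → M) :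
    ∑ β ∈ partitionFinset (p - j), f (β + Finsupp.single j 1) =
      ∑ α ∈ partitionFinset p with α j ≠ 0, f α := by
  refine sum_nbij' (· + Finsupp.single j 1) (· - Finsupp.single j 1) (fun β hβ => ?_)
    (fun α hα => ?_) (fun β _ => add_tsub_cancel_right β _) (fun α hα => ?_) fun _ _ => rfl
  · simp only [mem_filter, mem_partitionFinset] at hβ ⊢
    exact ⟨add_single_mem_partitions hj hβ, by simp⟩
  · simp only [mem_filter, mem_partitionFinset] at hα ⊢
    exact sub_single_mem_partitions hα.1 (Finsupp.mem_support_iff.2 hα.2)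
  · simp only [mem_filter, mem_partitionFinset] at hα
    exact tsub_add_cancel_of_le (Finsupp.single_le_iff.2 (Nat.one_le_iff_ne_zero.2 hα.2))

lemma sum_partitionFinset_sum_support {M : Type*} [AddCommMonoid M] (p : ℕ)
    (F : ℕ → (ℕ →₀ ℕ) → M) :
    ∑ α ∈ partitionFinset p, ∑ j ∈ α.support, F j α =
      ∑ j ∈ Icc 1 p, ∑ β ∈ partitionFinset (p - j), F j (β + Finsupp.single j 1) := by
  rw [sum_comm' (t' := Icc 1 p) (s' := fun j => {α ∈ partitionFinset p | α j ≠ 0})]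
  · exact sum_congr rfl fun j hj => (sum_partitionFinset_add_single hj _).symm
  · intro α j
    simp only [mem_partitionFinset, mem_filter, Finsupp.mem_support_iff]
    exact ⟨fun h => ⟨⟨h.1, h.2⟩, support_subset_Icc h.1 (Finsupp.mem_support_iff.2 h.2)⟩,
      fun h => h.1⟩

lemma pfact_pos (α : ℕ →₀ ℕ) : 0 < pfact α :=
  prod_pos fun _ _ => Nat.factorial_pos _

lemma pfact_add_single (β : ℕ →₀ ℕ) (j : ℕ) :
    pfact (β + Finsupp.single j 1) = (β j + 1) * pfact β := by
  have hsupp : (β + Finsupp.single j 1).support ⊆ insert j β.support := by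
    refine Finsupp.support_add.trans (union_subset (subset_insert _ _) ?_)
    exact (Finsupp.support_single_subset).trans (singleton_subset_iff.2 (mem_insert_self _ _))
  unfold pfact
  rw [Finsupp.prod_of_support_subset _ hsupp _ fun _ _ => rfl,
    Finsupp.prod_of_support_subset _ (subset_insert j _) _ fun _ _ => rfl,
    ← mul_prod_erase _ _ (mem_insert_self j _), ← mul_prod_erase _ _ (mem_insert_self j _),
    prod_congr rfl fun q hq => by
      rw [Finsupp.add_apply, Finsupp.single_eq_of_ne (ne_of_mem_erase hq), add_zero]]
  simp [Nat.factorial_succ, mul_assoc]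

lemma pnorm_add_single (β : ℕ →₀ ℕ) (j : ℕ) : pnorm (β + Finsupp.single j 1) = pnorm β + 1 := by
  rw [pnorm, pnorm, Finsupp.sum_add_index' (fun _ => rfl) fun _ _ _ => rfl,
    Finsupp.sum_single_index rfl]

lemma prod_pow_add_single (x : ℕ → ℝ) (β : ℕ →₀ ℕ) (j : ℕ) :
    ((β + Finsupp.single j 1).prod fun q e => x q ^ e) = x j * β.prod fun q e => x q ^ e := by
  rw [Finsupp.prod_add_index' (fun _ => pow_zero _) fun _ _ _ => pow_add _ _ _,
    Finsupp.prod_single_index (h := fun q e => x q ^ e) (pow_zero _), pow_one, mul_comm]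

def partitionSum (φ : ℕ → ℝ) (p : ℕ) (x : ℕ → ℝ) : ℝ :=
  ∑ α ∈ partitionFinset p, φ (pnorm α) * (α.prod fun q e => x q ^ e) / pfact α

lemma partitionSum_zero (φ x : ℕ → ℝ) : partitionSum φ 0 x = φ 0 := by
  simp [partitionSum, partitionFinset_zero, pnorm, pfact]

lemma partitionSum_congr (φ : ℕ → ℝ) {p : ℕ} {x y : ℕ → ℝ} (h : ∀ q ∈ Icc 1 p, x q = y q) :
    partitionSum φ p x = partitionSum φ p y :=
  sum_congr rfl fun α hα => by
    rw [Finsupp.prod, Finsupp.prod, prod_congr rfl fun q hq =>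
      by rw [h q (support_subset_Icc (mem_partitionFinset.1 hα) hq)]]

lemma sum_weight_mul_partitionSum (φ w x : ℕ → ℝ) (p : ℕ) :
    ∑ α ∈ partitionFinset p,
        (∑ j ∈ α.support, w j * α j) * (φ (pnorm α) * (α.prod fun q e => x q ^ e) / pfact α) =
      ∑ j ∈ Icc 1 p, w j * x j * partitionSum (fun n => φ (n + 1)) (p - j) x := by
  simp_rw [sum_mul]
  rw [sum_partitionFinset_sum_support]
  refine sum_congr rfl fun j _ => ?_
  rw [partitionSum, mul_sum]
  refine sum_congr rfl fun β _ => ?_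
  rw [pnorm_add_single, pfact_add_single, prod_pow_add_single, Finsupp.add_apply,
    Finsupp.single_eq_same]
  have := pfact_pos β
  push_cast
  field_simp

lemma natCast_mul_partitionSum (φ x : ℕ → ℝ) (p : ℕ) :
    p * partitionSum φ p x =
      ∑ j ∈ Icc 1 p, j * x j * partitionSum (fun n => φ (n + 1)) (p - j) x := by
  rw [← sum_weight_mul_partitionSum, partitionSum, mul_sum]
  refine sum_congr rfl fun α hα => ?_
  congr 1
  rw [← (mem_partitionFinset.1 hα).2, Finsupp.sum, Nat.cast_sum]
  push_cast
  rfl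

lemma partitionSum_natCast_mul (φ x : ℕ → ℝ) (p : ℕ) :
    partitionSum (fun n => n * φ n) p x =
      ∑ j ∈ Icc 1 p, x j * partitionSum (fun n => φ (n + 1)) (p - j) x := by
  have := sum_weight_mul_partitionSum φ 1 x p
  simp only [Pi.one_apply, one_mul] at this
  rw [← this, partitionSum]
  refine sum_congr rfl fun α _ => ?_
  rw [← Nat.cast_sum, mul_div_assoc, mul_div_assoc, ← mul_assoc]
  rfl

lemma sum_Icc_one_eq_sum_range {M : Type*} [AddCommMonoid M] (f : ℕ → M) (n : ℕ) :
    ∑ j ∈ Icc 1 n, f j = ∑ k ∈ range n, f (k + 1) := by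
  rw [range_eq_Ico, sum_Ico_add', zero_add, Ico_add_one_right_eq_Icc]

open PowerSeries

section PowerSeries

variable {R : Type*} [CommSemiring R]

lemma coeff_succ_mul (f g : R⟦X⟧) (n : ℕ) :
    coeff (n + 1) (f * g) =
      coeff 0 f * coeff (n + 1) g + ∑ j ∈ Icc 1 (n + 1), coeff j f * coeff (n + 1 - j) g := by
  rw [coeff_mul, Nat.sum_antidiagonal_eq_sum_range_succ_mk, sum_range_succ', add_comm,
    sum_Icc_one_eq_sum_range]
  simp

lemma coeff_derivative_mul (f g : R⟦X⟧) (n : ℕ) :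
    coeff n (d⁄dX R f * g) = ∑ j ∈ Icc 1 (n + 1), j * coeff j f * coeff (n + 1 - j) g := by
  rw [coeff_mul, Nat.sum_antidiagonal_eq_sum_range_succ_mk, sum_Icc_one_eq_sum_range]
  refine sum_congr rfl fun k hk => ?_
  rw [coeff_derivative, mul_comm (coeff (k + 1) f), show n + 1 - (k + 1) = n - k by omega]
  push_cast
  rfl

end PowerSeries

lemma eq_of_derivative_eq_mul_self {k : Type*} [Field k] [CharZero k] {F G V : k⟦X⟧}
    (hF : d⁄dX k F = V * F) (hG : d⁄dX k G = V * G) (hF₀ : constantCoeff F = 1)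
    (hG₀ : constantCoeff G = 1) : F = G := by
  have hGG : G⁻¹ * G = 1 := PowerSeries.inv_mul_cancel G (by simp [hG₀])
  have hFG : F * G⁻¹ = 1 := by
    refine derivative.ext ?_ (by simp [hF₀, hG₀])
    rw [derivative_one, Derivation.leibniz, derivative_inv', hF, hG, smul_eq_mul, smul_eq_mul]
    linear_combination (-(F * G⁻¹ * V)) * hGG
  calc F = F * G⁻¹ * G := by rw [mul_assoc, hGG, mul_one]
    _ = G := by rw [hFG, one_mul]

-- `logWeight 0 = 0` (division by zero), which makes the constant coefficient of `logSeries` vanish.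
def logWeight (n : ℕ) : ℝ := (-1) ^ (n + 1) * n.factorial / n

def invWeight (n : ℕ) : ℝ := (-1) ^ n * n.factorial

lemma logWeight_succ (n : ℕ) : logWeight (n + 1) = invWeight n := by
  rw [logWeight, invWeight, Nat.factorial_succ]
  push_cast
  field_simp
  ring

lemma natCast_mul_logWeight {n : ℕ} (hn : n ≠ 0) : n * logWeight n = -invWeight n := by
  rw [logWeight, invWeight]
  field_simp
  ring

/- With `W = ∑_{q ≥ 1} w_q X^q` and `G = ∑_{q ≥ 1} g_q X^q`, the next three series are the
expansions of `exp W`, `log (1 + G)` and `(1 + G)⁻¹` (multinomial theorem); the constant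
coefficients `w_0`, `g_0` are ignored. -/

def expSeries (W : ℝ⟦X⟧) : ℝ⟦X⟧ :=
  mk fun p => partitionSum (fun _ => 1) p fun q => coeff q W

def logSeries (G : ℝ⟦X⟧) : ℝ⟦X⟧ :=
  mk fun p => partitionSum logWeight p fun q => coeff q G

def invSeries (G : ℝ⟦X⟧) : ℝ⟦X⟧ :=
  mk fun p => partitionSum invWeight p fun q => coeff q G

lemma constantCoeff_expSeries (W : ℝ⟦X⟧) : constantCoeff (expSeries W) = 1 := by
  rw [← coeff_zero_eq_constantCoeff_apply, expSeries, coeff_mk, partitionSum_zero]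

lemma constantCoeff_logSeries (G : ℝ⟦X⟧) : constantCoeff (logSeries G) = 0 := by
  rw [← coeff_zero_eq_constantCoeff_apply, logSeries, coeff_mk, partitionSum_zero, logWeight,
    Nat.cast_zero, div_zero]

lemma derivative_expSeries (W : ℝ⟦X⟧) : d⁄dX ℝ (expSeries W) = d⁄dX ℝ W * expSeries W := by
  ext n
  rw [coeff_derivative, coeff_derivative_mul, expSeries, coeff_mk, mul_comm,
    ← Nat.cast_add_one, natCast_mul_partitionSum]
  simp only [coeff_mk]

lemma derivative_logSeries (G : ℝ⟦X⟧) : d⁄dX ℝ (logSeries G) = d⁄dX ℝ G * invSeries G := by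
  ext n
  rw [coeff_derivative, coeff_derivative_mul, logSeries, coeff_mk, mul_comm,
    ← Nat.cast_add_one, natCast_mul_partitionSum]
  simp only [logWeight_succ, invSeries, coeff_mk]

lemma mul_invSeries {G : ℝ⟦X⟧} (hG : constantCoeff G = 1) : G * invSeries G = 1 := by
  ext (_ | n)
  · simp [hG, invSeries, partitionSum_zero, invWeight]
  · rw [coeff_succ_mul, coeff_one, if_neg n.succ_ne_zero, coeff_zero_eq_constantCoeff_apply, hG,
      one_mul]
    have hrec := partitionSum_natCast_mul logWeight (coeff · G) (n + 1)
    simp only [logWeight_succ] at hrec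
    simp only [invSeries, coeff_mk]
    rw [← hrec, partitionSum, partitionSum, ← sum_add_distrib]
    refine sum_eq_zero fun α hα => ?_
    rw [natCast_mul_logWeight (pnorm_pos n.succ_ne_zero (mem_partitionFinset.1 hα)).ne']
    ring

theorem logSeries_expSeries (W : ℝ⟦X⟧) : logSeries (expSeries W) = W - C (constantCoeff W) := by
  refine derivative.ext ?_ (by simp [constantCoeff_logSeries])
  rw [derivative_logSeries, derivative_expSeries, mul_assoc,
    mul_invSeries (constantCoeff_expSeries W), mul_one, map_sub, derivative_C, sub_zero]

theorem expSeries_logSeries {G : ℝ⟦X⟧} (hG : constantCoeff G = 1) :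
    expSeries (logSeries G) = G := by
  refine eq_of_derivative_eq_mul_self (derivative_expSeries _) ?_ (constantCoeff_expSeries _) hG
  rw [derivative_logSeries, mul_assoc, mul_comm (invSeries G), mul_invSeries hG, mul_one]

lemma neg_one_pow_sub_eq_pow_add {R : Type*} [Monoid R] [HasDistribNeg R] {n p : ℕ} (h : n ≤ p) :
    (-1 : R) ^ (p - n) = (-1) ^ (p + n) := by
  rw [show p + n = p - n + 2 * n by omega, pow_add, pow_mul, neg_one_sq, one_pow, mul_one]

lemma prod_neg_one_pow_mul {p : ℕ} {α : ℕ →₀ ℕ} (hα : α ∈ partitions p) (x : ℕ → ℝ) :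
    (α.prod fun q e => ((-1) ^ (q + 1) * x q) ^ e) =
      (-1) ^ (p - pnorm α) * α.prod fun q e => x q ^ e := by
  simp only [mul_pow, ← pow_mul]
  rw [Finsupp.prod_mul, neg_one_pow_sub_eq_pow_add (pnorm_le hα), ← hα.2]
  unfold Finsupp.prod pnorm Finsupp.sum
  rw [prod_pow_eq_pow_sum, ← sum_add_distrib]
  simp only [add_mul, one_mul]

lemma Pfun_eq_partitionSum (p : ℕ) (x : ℕ → ℝ) :
    Pfun p x = p.factorial * partitionSum (fun _ => 1) p fun q => (-1) ^ (q + 1) * x q := by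
  refine (tsum_partitions p fun α => (-1) ^ (p - pnorm α) * ((p.factorial : ℝ) / pfact α) *
    α.prod fun q e => x q ^ e).trans ?_
  rw [partitionSum, mul_sum]
  refine sum_congr rfl fun α hα => ?_
  rw [prod_neg_one_pow_mul (mem_partitionFinset.1 hα)]
  ring

lemma Qfun_eq_partitionSum (p : ℕ) (y : ℕ → ℝ) :
    Qfun p y = (-1) ^ (p + 1) * partitionSum logWeight p fun q => y q / q.factorial := by
  refine (tsum_partitions p fun α => (-1) ^ (p - pnorm α) / (pnorm α : ℝ) *
    ((pnorm α).factorial / (pfact α : ℝ)) * α.prod fun q e => (y q / q.factorial) ^ e).trans ?_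
  rw [partitionSum, mul_sum]
  refine sum_congr rfl fun α hα => ?_
  rw [logWeight, neg_one_pow_sub_eq_pow_add (pnorm_le (mem_partitionFinset.1 hα))]
  ring

lemma Pfun_congr (p : ℕ) {x y : ℕ → ℝ} (h : ∀ q ∈ Icc 1 p, x q = y q) : Pfun p x = Pfun p y := by
  rw [Pfun_eq_partitionSum, Pfun_eq_partitionSum,
    partitionSum_congr _ fun q hq => by rw [h q hq]]

lemma Qfun_congr (p : ℕ) {x y : ℕ → ℝ} (h : ∀ q ∈ Icc 1 p, x q = y q) : Qfun p x = Qfun p y := by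
  rw [Qfun_eq_partitionSum, Qfun_eq_partitionSum,
    partitionSum_congr _ fun q hq => by rw [h q hq]]

lemma Pfun_eq_coeff_expSeries {p : ℕ} {x : ℕ → ℝ} {W : ℝ⟦X⟧}
    (hW : ∀ q ≠ 0, coeff q W = (-1) ^ (q + 1) * x q) :
    Pfun p x = p.factorial * coeff p (expSeries W) := by
  rw [Pfun_eq_partitionSum, expSeries, coeff_mk,
    partitionSum_congr _ fun q hq => hW q (Nat.one_le_iff_ne_zero.1 (mem_Icc.1 hq).1)]

lemma Qfun_eq_coeff_logSeries {p : ℕ} {y : ℕ → ℝ} {G : ℝ⟦X⟧}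
    (hG : ∀ q ≠ 0, coeff q G = y q / q.factorial) :
    Qfun p y = (-1) ^ (p + 1) * coeff p (logSeries G) := by
  rw [Qfun_eq_partitionSum, logSeries, coeff_mk,
    partitionSum_congr _ fun q hq => hG q (Nat.one_le_iff_ne_zero.1 (mem_Icc.1 hq).1)]

lemma neg_one_pow_mul_neg_one_pow {R : Type*} [Monoid R] [HasDistribNeg R] (n : ℕ) :
    (-1 : R) ^ n * (-1) ^ n = 1 := by
  rw [← pow_add, Even.neg_one_pow ⟨n, rfl⟩]

theorem Qfun_Pfun (x : ℕ → ℝ) {m : ℕ} (hm : m ≠ 0) : Qfun m (fun j => Pfun j x) = x m := by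
  set W : ℝ⟦X⟧ := mk fun q => (-1) ^ (q + 1) * x q
  have hP (q : ℕ) : Pfun q x = q.factorial * coeff q (expSeries W) :=
    Pfun_eq_coeff_expSeries fun q _ => coeff_mk _ _
  rw [Qfun_eq_coeff_logSeries (G := expSeries W) fun q _ => by rw [hP q]; field_simp,
    logSeries_expSeries, map_sub, coeff_C, if_neg hm, sub_zero, coeff_mk, ← mul_assoc,
    neg_one_pow_mul_neg_one_pow, one_mul]

theorem Pfun_Qfun (z : ℕ → ℝ) {m : ℕ} (hm : m ≠ 0) : Pfun m (fun j => Qfun j z) = z m := by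
  set G : ℝ⟦X⟧ := mk fun q => if q = 0 then 1 else z q / q.factorial
  have hQ (q : ℕ) : Qfun q z = (-1) ^ (q + 1) * coeff q (logSeries G) :=
    Qfun_eq_coeff_logSeries fun q hq => by simp [G, hq]
  rw [Pfun_eq_coeff_expSeries (W := logSeries G) fun q _ => by
      rw [hQ, ← mul_assoc, neg_one_pow_mul_neg_one_pow, one_mul],
    expSeries_logSeries (by simp [G]), coeff_mk, if_neg hm]
  field_simp

lemma extVec_succ {p : ℕ} (x : Fin p → ℝ) (i : Fin p) : extVec p x (i + 1) = x i := by
  rw [extVec, dif_pos ⟨by omega, i.2⟩]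
  simp

lemma extVec_of_fun_succ {p q : ℕ} (f : ℕ → ℝ) (hq : q ∈ Icc 1 p) :
    extVec p (fun i : Fin p => f (i + 1)) q = f q := by
  rw [mem_Icc] at hq
  rw [extVec, dif_pos hq, Nat.sub_add_cancel hq.1]

lemma extVec_update {p : ℕ} (x : Fin p → ℝ) (i : Fin p) (t : ℝ) :
    extVec p (Function.update x i t) = Function.update (extVec p x) (i + 1) t := by
  funext q
  unfold extVec
  by_cases hq : 1 ≤ q ∧ q ≤ p
  · rw [dif_pos hq, Function.update_apply, Function.update_apply, dif_pos hq]
    simp only [Fin.ext_iff]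
    congr 1
    exact propext ⟨fun h => by omega, fun h => by omega⟩
  · rw [dif_neg hq, Function.update_of_ne (by omega), dif_neg hq]

lemma leftInverse_Psi_Phi (p : ℕ) : Function.LeftInverse (Psi p) (Phi p) := fun x => by
  funext i
  have hPhi : ∀ q ∈ Icc 1 (i.1 + 1), extVec p (Phi p x) q = Pfun q (extVec p x) := fun q hq =>
    extVec_of_fun_succ (fun j => Pfun j (extVec p x)) (Icc_subset_Icc_right i.2 hq)
  rw [Psi, Qfun_congr _ hPhi, Qfun_Pfun _ i.1.succ_ne_zero, extVec_succ]

lemma rightInverse_Psi_Phi (p : ℕ) : Function.RightInverse (Psi p) (Phi p) := fun x => by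
  funext i
  have hPsi : ∀ q ∈ Icc 1 (i.1 + 1), extVec p (Psi p x) q = Qfun q (extVec p x) := fun q hq =>
    extVec_of_fun_succ (fun j => Qfun j (extVec p x)) (Icc_subset_Icc_right i.2 hq)
  rw [Phi, Pfun_congr _ hPsi, Pfun_Qfun _ i.1.succ_ne_zero, extVec_succ]

section Smoothness

variable {E : Type*} [NormedAddCommGroup E] [NormedSpace ℝ E] {n : WithTop ℕ∞}

lemma contDiff_partitionSum (φ : ℕ → ℝ) (p : ℕ) {x : E → ℕ → ℝ}
    (hx : ∀ q, ContDiff ℝ n fun y => x y q) : ContDiff ℝ n fun y => partitionSum φ p (x y) :=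
  ContDiff.sum fun _ _ =>
    (contDiff_const.mul (contDiff_prod fun q _ => (hx q).pow _)).div_const _

lemma contDiff_extVec (p q : ℕ) : ContDiff ℝ n fun x : Fin p → ℝ => extVec p x q := by
  unfold extVec
  split_ifs
  · exact contDiff_apply ℝ ℝ _
  · exact contDiff_const

lemma contDiff_Phi (p : ℕ) : ContDiff ℝ n (Phi p) := by
  refine contDiff_pi.2 fun i => ?_
  simp only [Phi, Pfun_eq_partitionSum]
  exact contDiff_const.mul (contDiff_partitionSum _ _ fun q =>
    contDiff_const.mul (contDiff_extVec p q))

lemma contDiff_Psi (p : ℕ) : ContDiff ℝ n (Psi p) := by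
  refine contDiff_pi.2 fun i => ?_
  simp only [Psi, Qfun_eq_partitionSum]
  exact contDiff_const.mul (contDiff_partitionSum _ _ fun q =>
    (contDiff_extVec p q).div_const _)

end Smoothness

lemma eq_single_of_apply_ne_zero {m : ℕ} {α : ℕ →₀ ℕ} (hα : α ∈ partitions m) (h : α m ≠ 0) :
    α = Finsupp.single m 1 := by
  have hsub := sub_single_mem_partitions hα (Finsupp.mem_support_iff.2 h)
  rw [Nat.sub_self, ← mem_partitionFinset, partitionFinset_zero, mem_singleton,
    tsub_eq_zero_iff_le] at hsub
  exact le_antisymm hsub (Finsupp.single_le_iff.2 (Nat.one_le_iff_ne_zero.2 h))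

lemma single_mem_partitions {m : ℕ} (hm : m ≠ 0) : Finsupp.single m 1 ∈ partitions m :=
  ⟨Finsupp.single_eq_of_ne hm.symm, by simp⟩

lemma partitionSum_eq_update_add (φ : ℕ → ℝ) {m : ℕ} (hm : m ≠ 0) (x : ℕ → ℝ) :
    partitionSum φ m x = partitionSum φ m (Function.update x m 0) + φ 1 * x m := by
  have hterm : ∀ α ∈ partitionFinset m,
      φ (pnorm α) * (α.prod fun q e => x q ^ e) / pfact α =
        φ (pnorm α) * (α.prod fun q e => Function.update x m 0 q ^ e) / pfact α +
          if Finsupp.single m 1 = α then φ 1 * x m else 0 := by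
    intro α hα
    by_cases h : α m = 0
    · rw [if_neg (by rintro rfl; simp at h), add_zero]
      congr 2
      exact Finsupp.prod_congr fun q hq => by
        rw [Function.update_of_ne (by rintro rfl; exact Finsupp.mem_support_iff.1 hq h)]
    · obtain rfl := eq_single_of_apply_ne_zero (mem_partitionFinset.1 hα) h
      simp [pnorm, pfact]
  unfold partitionSum
  rw [sum_congr rfl hterm, sum_add_distrib, sum_ite_eq,
    if_pos (mem_partitionFinset.2 (single_mem_partitions hm))]

lemma Pfun_eq_update_add {m : ℕ} (hm : m ≠ 0) (x : ℕ → ℝ) :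
    Pfun m x = Pfun m (Function.update x m 0) + (-1) ^ (m + 1) * m.factorial * x m := by
  have hupd : Function.update (fun q => (-1) ^ (q + 1) * x q) m 0 =
      fun q => (-1 : ℝ) ^ (q + 1) * Function.update x m 0 q := by
    funext q
    by_cases hq : q = m <;> simp [hq]
  rw [Pfun_eq_partitionSum, Pfun_eq_partitionSum, partitionSum_eq_update_add _ hm, hupd]
  ring

section Jacobian

variable {p : ℕ} (x : Fin p → ℝ)

lemma Phi_update_of_lt {i j : Fin p} (hij : i < j) (t : ℝ) :
    Phi p (Function.update x j t) i = Phi p x i := by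
  simp only [Phi, extVec_update]
  refine Pfun_congr _ fun q hq => Function.update_of_ne ?_ _ _
  have := (mem_Icc.1 hq).2
  have : i.1 < j.1 := hij
  omega

lemma Phi_update_self (i : Fin p) (t : ℝ) :
    Phi p (Function.update x i t) i =
      Phi p (Function.update x i 0) i + (-1) ^ (i.1 + 2) * (i.1 + 1).factorial * t := by
  simp only [Phi, extVec_update]
  rw [Pfun_eq_update_add i.1.succ_ne_zero, Function.update_idem, Function.update_self]

lemma hasDerivAt_Phi_update (i j : Fin p) :
    HasDerivAt (fun t => Phi p (Function.update x j t) i)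
      (fderiv ℝ (Phi p) x (Pi.single j 1) i) (x j) := by
  have hx := ((contDiff_Phi (n := 1) p).differentiable one_ne_zero
    (Function.update x j (x j))).hasFDerivAt.comp_hasDerivAt (x j) (hasDerivAt_update x j (x j))
  rw [Function.update_eq_self] at hx
  exact hasDerivAt_pi.1 hx i

lemma fderiv_Phi_single_of_lt {i j : Fin p} (hij : i < j) :
    fderiv ℝ (Phi p) x (Pi.single j 1) i = 0 := by
  refine (hasDerivAt_Phi_update x i j).unique ?_
  simp only [Phi_update_of_lt x hij]
  exact hasDerivAt_const _ _

lemma fderiv_Phi_single_self (i : Fin p) :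
    fderiv ℝ (Phi p) x (Pi.single i 1) i = (-1) ^ (i.1 + 2) * (i.1 + 1).factorial := by
  refine (hasDerivAt_Phi_update x i i).unique ?_
  rw [funext (Phi_update_self x i)]
  simpa using ((hasDerivAt_id (x i)).const_mul
    ((-1 : ℝ) ^ (i.1 + 2) * (i.1 + 1).factorial)).const_add (Phi p (Function.update x i 0) i)

lemma det_fderiv_Phi :
    (fderiv ℝ (Phi p) x).det = ∏ i : Fin p, (-1) ^ (i.1 + 2) * ((i.1 + 1).factorial : ℝ) := by
  have hlower :
      (LinearMap.toMatrix' (fderiv ℝ (Phi p) x : (Fin p → ℝ) →ₗ[ℝ] Fin p → ℝ)).IsLowerTriangular :=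
    fun i j hij => fderiv_Phi_single_of_lt x hij
  rw [ContinuousLinearMap.det, ← LinearMap.det_toMatrix', Matrix.det_of_isLowerTriangular _ hlower]
  exact prod_congr rfl fun i _ => fderiv_Phi_single_self x i

lemma abs_det_fderiv_Phi :
    |(fderiv ℝ (Phi p) x).det| = ∏ q ∈ Icc 1 p, (q.factorial : ℝ) := by
  rw [det_fderiv_Phi, abs_prod]
  simp only [abs_mul, abs_pow, abs_neg, abs_one, one_pow, one_mul, Nat.abs_cast]
  rw [Fin.prod_univ_eq_prod_range (fun i => ((i + 1).factorial : ℝ)), range_eq_Ico,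
    prod_Ico_add' (fun q : ℕ => (q.factorial : ℝ)) 0 p 1, zero_add, Ico_add_one_right_eq_Icc]

end Jacobian

theorem statement_9_general (p : ℕ) :
    ContDiff ℝ (⊤ : ℕ∞) (Phi p) ∧ ContDiff ℝ (⊤ : ℕ∞) (Psi p) ∧
    Function.Bijective (Phi p) ∧
    Function.LeftInverse (Psi p) (Phi p) ∧ Function.RightInverse (Psi p) (Phi p) ∧
    ∀ x : Fin p → ℝ,
      |(fderiv ℝ (Phi p) x).det| = ∏ q ∈ Finset.Icc 1 p, (q.factorial : ℝ) :=
  ⟨contDiff_Phi p, contDiff_Psi p,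
    ⟨(leftInverse_Psi_Phi p).injective, (rightInverse_Psi_Phi p).surjective⟩,
    leftInverse_Psi_Phi p, rightInverse_Psi_Phi p, abs_det_fderiv_Phi⟩

theorem statement_9 (p : ℕ) (hp : 2 ≤ p) :
    ContDiff ℝ (⊤ : ℕ∞) (Phi p) ∧ ContDiff ℝ (⊤ : ℕ∞) (Psi p) ∧
    Function.Bijective (Phi p) ∧
    Function.LeftInverse (Psi p) (Phi p) ∧ Function.RightInverse (Psi p) (Phi p) ∧
    ∀ x : Fin p → ℝ,
      |(fderiv ℝ (Phi p) x).det| = ∏ q ∈ Finset.Icc 1 p, (q.factorial : ℝ) :=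
  statement_9_general p

end Stmt9
end
end

section
/- For every integer p ≥ 1, the coefficient A_p = Q_p(1, 1/2!, …, 1/p!) is strictly positive. -/
noncomputable section

namespace Stmt11

/-- The set `𝒫(p)` of partitions of `p`, encoded as finitely supported functions
`α : ℕ →₀ ℕ` with `α 0 = 0` and `Σ_k k·α_k = p` (`α_k` is the number of parts equal to `k`). -/
def partitions (p : ℕ) : Set (ℕ →₀ ℕ) :=
  {α | α 0 = 0 ∧ (α.sum fun k e => k * e) = p}

/-- `‖α‖ = Σ_k α_k`, the number of parts. -/
def pnorm (α : ℕ →₀ ℕ) : ℕ := α.sum fun _ e => e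

/-- `α! = ∏_k α_k!`. -/
def pfact (α : ℕ →₀ ℕ) : ℕ := α.prod fun _ e => e.factorial

/-- The polynomial (function) `P_p(X₁,…,X_p) = Σ_{α∈𝒫(p)} (−1)^{p−‖α‖} (p!/α!) ∏_q X_q^{α_q}`. -/
def Pfun (p : ℕ) (x : ℕ → ℝ) : ℝ :=
  ∑' α : partitions p,
    (-1 : ℝ) ^ (p - pnorm α.1) * ((p.factorial : ℝ) / (pfact α.1 : ℝ)) *
      α.1.prod fun q e => x q ^ e

/-- The polynomial (function)
`Q_p(X₁,…,X_p) = Σ_{α∈𝒫(p)} ((−1)^{p−‖α‖}/‖α‖) (‖α‖!/α!) ∏_q (X_q/q!)^{α_q}`. -/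
def Qfun (p : ℕ) (x : ℕ → ℝ) : ℝ :=
  ∑' α : partitions p,
    (-1 : ℝ) ^ (p - pnorm α.1) / (pnorm α.1 : ℝ) *
      (((pnorm α.1).factorial : ℝ) / (pfact α.1 : ℝ)) *
      α.1.prod fun q e => (x q / (q.factorial : ℝ)) ^ e

/-- `A_p = Q_p(1, 1/2!, …, 1/p!)`. -/
def Acoef (p : ℕ) : ℝ := Qfun p fun q => ((q.factorial : ℝ))⁻¹

/-! With `e q = 1 / q!²`, `A_p` is the coefficient of `t ^ p` in `-log Y` for
`Y = ∑ (-1)^q e_q t^q = J₀(2√t)`. Removing one part from each partition proves Newton's identity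
`Y D = -Y'` for `D = ∑ p A_p t^(p-1)`. Bessel's equation `t Y'' + Y' + Y = 0` then turns it into the
Riccati equation `t D' + D - t D² = 1`, i.e. `d₀ = 1` and `(n + 2) d_(n+1) = ∑_(i+j=n) d_i d_j`,
so every coefficient of `D` is positive by induction. -/

open Finset

section Partitions

variable {p i : ℕ} {α : ℕ →₀ ℕ}

lemma pnorm_eq_degree (α : ℕ →₀ ℕ) : pnorm α = α.degree := rfl

lemma pos_of_mem_support (hα : α ∈ partitions p) (hi : i ∈ α.support) : 0 < i :=
  Nat.pos_of_ne_zero fun h => Finsupp.mem_support_iff.1 hi (h ▸ hα.1)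

lemma apply_le_pnorm (α : ℕ →₀ ℕ) (i : ℕ) : α i ≤ pnorm α := Finsupp.le_degree i α

lemma pnorm_le (hα : α ∈ partitions p) : pnorm α ≤ p :=
  hα.2 ▸ sum_le_sum fun _ hj => Nat.le_mul_of_pos_left _ (pos_of_mem_support hα hj)

lemma pnorm_pos (hp : p ≠ 0) (hα : α ∈ partitions p) : 0 < pnorm α := by
  refine Nat.pos_of_ne_zero fun h => hp ?_
  rw [pnorm_eq_degree, Finsupp.degree_eq_zero_iff] at h
  simpa [h] using hα.2.symm

lemma support_subset_Icc (hα : α ∈ partitions p) : α.support ⊆ Icc 1 p := fun i hi =>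
  have hαi : 0 < α i := Nat.pos_of_ne_zero (Finsupp.mem_support_iff.1 hi)
  mem_Icc.2 ⟨pos_of_mem_support hα hi, hα.2 ▸ (Nat.le_mul_of_pos_right i hαi).trans
    (single_le_sum (f := fun j => j * α j) (fun _ _ => Nat.zero_le _) hi)⟩

lemma le_indicator_of_mem_partitions (hα : α ∈ partitions p) :
    α ≤ Finsupp.indicator (Icc 1 p) fun _ _ => p := by
  intro i
  by_cases hi : i ∈ α.support
  · rw [Finsupp.indicator_apply, dif_pos (support_subset_Icc hα hi)]
    exact (apply_le_pnorm α i).trans (pnorm_le hα)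
  · simp [Finsupp.notMem_support_iff.1 hi]

open scoped Classical in
def partitionFinset (p : ℕ) : Finset (ℕ →₀ ℕ) :=
  (Iic (Finsupp.indicator (Icc 1 p) fun _ _ => p)).filter (· ∈ partitions p)

lemma mem_partitionFinset : α ∈ partitionFinset p ↔ α ∈ partitions p := by
  classical
  simp only [partitionFinset, mem_filter, mem_Iic, and_iff_right_iff_imp]
  exact le_indicator_of_mem_partitions

lemma coe_partitionFinset (p : ℕ) : (partitionFinset p : Set (ℕ →₀ ℕ)) = partitions p :=
  Set.ext fun _ => mem_partitionFinset

lemma weight_add_single (β : ℕ →₀ ℕ) (i : ℕ) :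
    ((β + Finsupp.single i 1).sum fun k e => k * e) = (β.sum fun k e => k * e) + i := by
  rw [Finsupp.sum_add_index' (fun _ => Nat.mul_zero _) (fun _ _ _ => Nat.mul_add _ _ _),
    Finsupp.sum_single_index (Nat.mul_zero i), Nat.mul_one]

lemma pnorm_add_single (β : ℕ →₀ ℕ) (i : ℕ) : pnorm (β + Finsupp.single i 1) = pnorm β + 1 := by
  simp [pnorm_eq_degree]

lemma pnorm_single (i n : ℕ) : pnorm (Finsupp.single i n) = n := by
  simp [pnorm_eq_degree]

lemma pfact_add_single (β : ℕ →₀ ℕ) (i : ℕ) :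
    pfact (β + Finsupp.single i 1) = (β i + 1) * pfact β := by
  have h := Finsupp.mul_prod_erase' (β + Finsupp.single i 1) i (fun _ e => e.factorial)
    fun _ => rfl
  rw [Finsupp.erase_add, Finsupp.erase_single, add_zero, Finsupp.add_apply,
    Finsupp.single_eq_same, Nat.factorial_succ, mul_assoc,
    Finsupp.mul_prod_erase' β i (fun _ e => e.factorial) fun _ => rfl] at h
  exact h.symm

lemma image_add_single (hi : i ∈ Icc 1 p) :
    (partitionFinset (p - i)).image (· + Finsupp.single i 1) =
      (partitionFinset p).filter (fun α => α i ≠ 0) := by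
  obtain ⟨hi1, hip⟩ := mem_Icc.1 hi
  ext α
  simp only [mem_image, mem_filter, mem_partitionFinset]
  constructor
  · rintro ⟨β, ⟨hβ0, hβw⟩, rfl⟩
    refine ⟨⟨?_, ?_⟩, by simp⟩
    · simp [hβ0, (Nat.one_le_iff_ne_zero.1 hi1).symm]
    · rw [weight_add_single, hβw]; omega
  · rintro ⟨⟨h0, hw⟩, hαi⟩
    have hle : Finsupp.single i 1 ≤ α := Finsupp.single_le_iff.2 (Nat.one_le_iff_ne_zero.2 hαi)
    refine ⟨α - Finsupp.single i 1, ⟨by simp [h0], ?_⟩, tsub_add_cancel_of_le hle⟩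
    have := weight_add_single (α - Finsupp.single i 1) i
    rw [tsub_add_cancel_of_le hle, hw] at this
    omega

lemma sum_sum_support_eq_sum_add_single {M : Type*} [AddCommMonoid M]
    (g : ℕ → (ℕ →₀ ℕ) → M) :
    ∑ α ∈ partitionFinset p, ∑ i ∈ α.support, g i α =
      ∑ i ∈ Icc 1 p, ∑ β ∈ partitionFinset (p - i), g i (β + Finsupp.single i 1) := by
  rw [sum_comm' (t' := Icc 1 p) (s' := fun i => (partitionFinset p).filter (fun α => α i ≠ 0))]
  · refine sum_congr rfl fun i hi => ?_
    rw [← image_add_single hi, sum_image fun _ _ _ _ => add_right_cancel]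
  · intro α i
    simp only [mem_filter, Finsupp.mem_support_iff, mem_partitionFinset]
    exact ⟨fun ⟨hα, hi⟩ => ⟨⟨hα, hi⟩, support_subset_Icc hα (Finsupp.mem_support_iff.2 hi)⟩,
      fun ⟨h, _⟩ => h⟩

lemma eq_single_of_pnorm_eq_one (hα : α ∈ partitions p) (h1 : pnorm α = 1) :
    α = Finsupp.single p 1 := by
  obtain ⟨i, hi⟩ : α.support.Nonempty :=
    Finsupp.support_nonempty_iff.2 fun h => by simp [h, pnorm_eq_degree] at h1
  have hsplit := congrArg Finsupp.degree (Finsupp.single_add_erase i α)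
  rw [map_add, Finsupp.degree_single, ← pnorm_eq_degree α, h1] at hsplit
  have hαi : α i = 1 := by have := Finsupp.mem_support_iff.1 hi; omega
  have hα_eq : α = Finsupp.single i 1 := by
    rw [← Finsupp.single_add_erase i α, hαi,
      (Finsupp.degree_eq_zero_iff (Finsupp.erase i α)).1 (by omega), add_zero]
  obtain rfl : i = p := by simpa [hα_eq] using hα.2
  exact hα_eq

end Partitions

section LogCoeff

variable {K : Type*} [Field K] (e : ℕ → K)

def weightedProd (α : ℕ →₀ ℕ) : K := α.prod fun q a => e q ^ a

def logTerm (p : ℕ) (α : ℕ →₀ ℕ) : K :=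
  (-1) ^ (p - pnorm α) * (((pnorm α - 1).factorial : K) / pfact α) * weightedProd e α

def logCoeff (p : ℕ) : K := ∑ α ∈ partitionFinset p, logTerm e p α

def reducedLogTerm (p : ℕ) (α : ℕ →₀ ℕ) : K :=
  (-1) ^ (p - pnorm α) * (((pnorm α - 2).factorial : K) / pfact α) * weightedProd e α

lemma weightedProd_add_single (β : ℕ →₀ ℕ) (i : ℕ) :
    weightedProd e (β + Finsupp.single i 1) = weightedProd e β * e i := by
  rw [weightedProd, weightedProd,
    Finsupp.prod_add_index' (fun _ => pow_zero _) (fun _ _ _ => pow_add _ _ _),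
    Finsupp.prod_single_index (h := fun q a => e q ^ a) (pow_zero _), pow_one]

lemma logTerm_single (p : ℕ) : logTerm e p (Finsupp.single p 1) = (-1) ^ (p - 1) * e p := by
  simp [logTerm, pnorm_eq_degree, pfact, weightedProd]

lemma pred_mul_reducedLogTerm {p : ℕ} {α : ℕ →₀ ℕ} (hα : 2 ≤ pnorm α) :
    ((pnorm α : K) - 1) * reducedLogTerm e p α = logTerm e p α := by
  obtain ⟨n, hn⟩ := Nat.exists_eq_add_of_le' hα
  rw [reducedLogTerm, logTerm, hn, show n + 2 - 1 = n + 1 by omega, Nat.factorial_succ]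
  push_cast
  ring

lemma mul_logTerm_eq_reducedLogTerm_add_single [CharZero K] {k i : ℕ} (hi : i ∈ Icc 1 k)
    {β : ℕ →₀ ℕ} (hβ : β ∈ partitions (k - i)) :
    (-1) ^ i * e i * logTerm e (k - i) β =
      -((((β + Finsupp.single i 1 : ℕ →₀ ℕ) i : ℕ) : K) *
        reducedLogTerm e k (β + Finsupp.single i 1)) := by
  obtain ⟨hi1, hik⟩ := mem_Icc.1 hi
  have hn := pnorm_le hβ
  have hsign : (-1 : K) ^ (k - (pnorm β + 1)) = -((-1) ^ i * (-1) ^ (k - i - pnorm β)) := by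
    rw [← pow_add, show i + (k - i - pnorm β) = k - (pnorm β + 1) + 1 by omega, pow_succ]
    ring
  -- truncated subtraction makes this hold also for `β = 0`, i.e. `i = k`
  have hfact : pnorm β + 1 - 2 = pnorm β - 1 := by omega
  rw [reducedLogTerm, logTerm, pnorm_add_single, pfact_add_single, weightedProd_add_single,
    hfact, hsign]
  have : (pfact β : K) ≠ 0 := Nat.cast_ne_zero.2 (prod_pos fun _ _ => Nat.factorial_pos _).ne'
  simp only [Finsupp.add_apply, Finsupp.single_eq_same]
  push_cast
  field_simp

lemma sum_pred_mul_reducedLogTerm {k : ℕ} (hk : k ≠ 0) :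
    ∑ α ∈ partitionFinset k, ((pnorm α : K) - 1) * reducedLogTerm e k α =
      logCoeff e k + (-1) ^ k * e k := by
  have hsingle : Finsupp.single k 1 ∈ partitionFinset k :=
    mem_partitionFinset.2 ⟨by simp [Ne.symm hk], by simp⟩
  have hrest : ∀ α ∈ (partitionFinset k).erase (Finsupp.single k 1),
      ((pnorm α : K) - 1) * reducedLogTerm e k α = logTerm e k α := by
    intro α hα
    obtain ⟨hne, hα⟩ := mem_erase.1 hα
    have hα := mem_partitionFinset.1 hα
    have := pnorm_pos hk hα
    have : pnorm α ≠ 1 := fun h => hne (eq_single_of_pnorm_eq_one hα h)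
    exact pred_mul_reducedLogTerm e (by omega)
  rw [logCoeff, ← add_sum_erase _ _ hsingle, ← add_sum_erase _ _ hsingle, sum_congr rfl hrest,
    logTerm_single, pnorm_single]
  obtain ⟨m, rfl⟩ := Nat.exists_eq_succ_of_ne_zero hk
  simp [pow_succ]

lemma sum_support_sub_mul [CharZero K] {k : ℕ} {α : ℕ →₀ ℕ} (hα : α ∈ partitions k) :
    ∑ i ∈ α.support, ((k - i : ℕ) : K) * α i = k * ((pnorm α : K) - 1) := by
  have hw : ∑ i ∈ α.support, (i : K) * α i = k := by exact_mod_cast hα.2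
  have hn : ∑ i ∈ α.support, (α i : K) = pnorm α := by exact_mod_cast rfl
  calc ∑ i ∈ α.support, ((k - i : ℕ) : K) * α i
      = ∑ i ∈ α.support, ((k : K) * α i - i * α i) := sum_congr rfl fun i hi => by
        rw [Nat.cast_sub (mem_Icc.1 (support_subset_Icc hα hi)).2]
        ring
    _ = k * ((pnorm α : K) - 1) := by rw [sum_sub_distrib, ← mul_sum, hw, hn]; ring

lemma sum_Icc_mul_logCoeff [CharZero K] {k : ℕ} (hk : k ≠ 0) :
    ∑ i ∈ Icc 1 k, ((k - i : ℕ) : K) * ((-1) ^ i * e i * logCoeff e (k - i)) =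
      -k * (logCoeff e k + (-1) ^ k * e k) := calc
  _ = ∑ i ∈ Icc 1 k, ∑ β ∈ partitionFinset (k - i), -(((k - i : ℕ) : K) *
        (((β + Finsupp.single i 1 : ℕ →₀ ℕ) i : ℕ) : K) *
          reducedLogTerm e k (β + Finsupp.single i 1)) := by
    refine sum_congr rfl fun i hi => ?_
    rw [logCoeff, mul_sum, mul_sum]
    refine sum_congr rfl fun β hβ => ?_
    rw [mul_logTerm_eq_reducedLogTerm_add_single e hi (mem_partitionFinset.1 hβ)]
    ring
  _ = ∑ α ∈ partitionFinset k, ∑ i ∈ α.support,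
        -(((k - i : ℕ) : K) * (α i : K) * reducedLogTerm e k α) :=
    (sum_sum_support_eq_sum_add_single
      fun i α => -(((k - i : ℕ) : K) * (α i : K) * reducedLogTerm e k α)).symm
  _ = -k * ∑ α ∈ partitionFinset k, ((pnorm α : K) - 1) * reducedLogTerm e k α := by
    rw [mul_sum]
    refine sum_congr rfl fun α hα => ?_
    rw [sum_neg_distrib, ← sum_mul, sum_support_sub_mul (mem_partitionFinset.1 hα)]
    ring
  _ = -k * (logCoeff e k + (-1) ^ k * e k) := by rw [sum_pred_mul_reducedLogTerm e hk]

end LogCoeff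

section Riccati

open PowerSeries

lemma riccati_of_logDeriv {R : Type*} [CommRing R] [IsDomain R] {Y D : R⟦X⟧} (hY : Y ≠ 0)
    (hD : Y * D = -d⁄dX R Y) (hode : X * d⁄dX R (d⁄dX R Y) + d⁄dX R Y + Y = 0) :
    X * d⁄dX R D + D - X * D ^ 2 = 1 := by
  have hD' : Y * d⁄dX R D + D * d⁄dX R Y = -d⁄dX R (d⁄dX R Y) := by
    simpa [Derivation.leibniz] using congrArg (d⁄dX R) hD
  apply mul_left_cancel₀ hY
  linear_combination X * hD' + (1 - X * D) * hD - hode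

lemma coeff_succ_of_riccati {K : Type*} [Field K] {D : K⟦X⟧}
    (h : X * d⁄dX K D + D - X * D ^ 2 = 1) (n : ℕ) :
    (n + 2) * coeff (n + 1) D = ∑ ij ∈ antidiagonal n, coeff ij.1 D * coeff ij.2 D := by
  have := congrArg (coeff (n + 1)) h
  rw [map_sub, map_add, coeff_succ_X_mul, coeff_succ_X_mul, coeff_derivative, coeff_one,
    if_neg n.add_one_ne_zero, sq, coeff_mul] at this
  linear_combination this

lemma coeff_pos_of_riccati {K : Type*} [Field K] [LinearOrder K] [IsStrictOrderedRing K]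
    {D : K⟦X⟧} (h : X * d⁄dX K D + D - X * D ^ 2 = 1) (n : ℕ) : 0 < coeff n D := by
  induction n using Nat.strong_induction_on with
  | _ n ih =>
  cases n with
  | zero =>
    have := congrArg (coeff 0) h
    simp only [map_sub, map_add, coeff_zero_X_mul, coeff_zero_eq_constantCoeff, map_one,
      zero_add, sub_zero] at this
    simp [coeff_zero_eq_constantCoeff_apply, this]
  | succ n =>
    have hsum : 0 < ∑ ij ∈ antidiagonal n, coeff ij.1 D * coeff ij.2 D :=
      sum_pos (fun ij hij => have := mem_antidiagonal.1 hij
        mul_pos (ih _ (by omega)) (ih _ (by omega))) ⟨(0, n), by simp⟩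
    rw [← coeff_succ_of_riccati h] at hsum
    exact pos_of_mul_pos_right hsum (by positivity)

end Riccati

section Series

open PowerSeries

variable {K : Type*} [Field K] [CharZero K] (e : ℕ → K)

def altSeries : K⟦X⟧ := mk fun n => (-1) ^ n * e n

def logDerivSeries : K⟦X⟧ := mk fun n => ((n + 1 : ℕ) : K) * logCoeff e (n + 1)

lemma altSeries_ne_zero (he : e 0 = 1) : altSeries e ≠ 0 := fun h => by
  simpa [altSeries, he] using congrArg (coeff 0) h

lemma altSeries_mul_logDerivSeries (he : e 0 = 1) :
    altSeries e * logDerivSeries e = -d⁄dX K (altSeries e) := by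
  ext n
  have h := sum_Icc_mul_logCoeff e n.add_one_ne_zero
  rw [← Ico_add_one_right_eq_Icc, sum_Ico_eq_sum_range, Nat.add_sub_cancel, sum_range_succ] at h
  rw [coeff_mul, Finset.Nat.sum_antidiagonal_eq_sum_range_succ_mk, sum_range_succ', map_neg,
    coeff_derivative]
  simp only [altSeries, logDerivSeries, coeff_mk, he]
  have hterm : ∀ i ∈ range n, (-1) ^ (i + 1) * e (i + 1) *
      (((n - (i + 1) + 1 : ℕ) : K) * logCoeff e (n - (i + 1) + 1)) =
      ((n + 1 - (1 + i) : ℕ) : K) *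
        ((-1) ^ (1 + i) * e (1 + i) * logCoeff e (n + 1 - (1 + i))) := by
    intro i hi
    have := mem_range.1 hi
    rw [show n - (i + 1) + 1 = n + 1 - (1 + i) by omega, add_comm i 1]
    ring
  rw [sum_congr rfl hterm]
  rw [show n + 1 - (1 + n) = 0 by omega, Nat.cast_zero, zero_mul, add_zero] at h
  simp only [pow_zero, one_mul, Nat.sub_zero]
  push_cast at h ⊢
  linear_combination h

end Series

section Bessel

open PowerSeries

variable {K : Type*} [Field K] [CharZero K]

def besselWeight (q : ℕ) : K := (q.factorial : K)⁻¹ / q.factorial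

lemma besselWeight_zero : besselWeight 0 = (1 : K) := by simp [besselWeight]

lemma sq_mul_besselWeight_succ (n : ℕ) :
    ((n + 1 : ℕ) : K) ^ 2 * besselWeight (n + 1) = besselWeight n := by
  have : (n.factorial : K) ≠ 0 := Nat.cast_ne_zero.2 n.factorial_ne_zero
  have : ((n + 1 : ℕ) : K) ≠ 0 := Nat.cast_ne_zero.2 n.add_one_ne_zero
  rw [besselWeight, besselWeight, Nat.factorial_succ, Nat.cast_mul]
  field_simp

lemma besselSeries_ode :
    X * d⁄dX K (d⁄dX K (altSeries besselWeight)) + d⁄dX K (altSeries besselWeight) +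
      altSeries besselWeight = 0 := by
  ext n
  rw [map_add, map_add, map_zero]
  cases n with
  | zero =>
    simp [coeff_derivative, altSeries, besselWeight]
  | succ n =>
    have h := sq_mul_besselWeight_succ (K := K) (n + 1)
    simp only [coeff_succ_X_mul, coeff_derivative, altSeries, coeff_mk, pow_succ] at h ⊢
    push_cast at h ⊢
    linear_combination (-1 : K) ^ n * h

end Bessel

lemma Qfun_eq_logCoeff {p : ℕ} (hp : p ≠ 0) (x : ℕ → ℝ) :
    Qfun p x = logCoeff (fun q => x q / q.factorial) p := by
  rw [Qfun, ← coe_partitionFinset, Finset.tsum_subtype' (partitionFinset p) fun α =>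
    (-1 : ℝ) ^ (p - pnorm α) / (pnorm α : ℝ) * (((pnorm α).factorial : ℝ) / (pfact α : ℝ)) *
      α.prod fun q e => (x q / (q.factorial : ℝ)) ^ e]
  refine sum_congr rfl fun α hα => ?_
  have hn := pnorm_pos hp (mem_partitionFinset.1 hα)
  rw [logTerm, weightedProd, ← Nat.mul_factorial_pred hn.ne', Nat.cast_mul]
  have : (pnorm α : ℝ) ≠ 0 := Nat.cast_ne_zero.2 hn.ne'
  field_simp

theorem statement_11 : ∀ p : ℕ, 1 ≤ p → 0 < Acoef p := by
  intro p hp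
  obtain ⟨n, rfl⟩ := Nat.exists_eq_add_of_le' hp
  have hriccati := riccati_of_logDeriv (altSeries_ne_zero _ (besselWeight_zero (K := ℝ)))
    (altSeries_mul_logDerivSeries _ besselWeight_zero) besselSeries_ode
  have hpos : 0 < ((n + 1 : ℕ) : ℝ) * logCoeff besselWeight (n + 1) := by
    simpa only [logDerivSeries, PowerSeries.coeff_mk] using coeff_pos_of_riccati hriccati n
  rw [Acoef, Qfun_eq_logCoeff n.add_one_ne_zero]
  exact pos_of_mul_pos_right hpos (by positivity)

end Stmt11
end
end

section
/- Let (v_n)_{n≥1} be a sequence of complex polynomials such that every complex root of every v_n is a nonpositive real number, and suppose that v_n converges, uniformly on every compact subset of ℂ, to a function v : ℂ → ℂ that is not identically zero (v is then automatically entire). Then every z ∈ ℂ with v(z) = 0 is a nonpositive real number. -/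
/-!
Hurwitz's theorem. The limit `f` is entire and not identically zero, so its zeros are isolated.
If `f` vanished at some `z₀` off `(-∞, 0]`, take a small circle around `z₀` whose closed disc
misses `(-∞, 0]` and on which `f` has no zero, so `‖f‖ ≥ m > 0` there. For large `n` the
polynomial `v n` has no zero in the disc and `‖v n‖ ≥ m / 2` on the circle, so by the maximum
modulus principle applied to `1 / v n` also `‖v n z₀‖ ≥ m / 2`, contradicting `v n z₀ → 0`.
-/

open Filter Metric Set Topology Complex

namespace Stmt12

theorem exists_nonpos_ofReal_eq_iff_notMem_slitPlane {z : ℂ} :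
    (∃ r : ℝ, r ≤ 0 ∧ z = r) ↔ z ∉ slitPlane := by
  rw [mem_slitPlane_iff_not_le_zero, not_not, Complex.nonpos_iff]
  constructor
  · rintro ⟨r, hr, rfl⟩
    simpa using hr
  · rintro ⟨hre, him⟩
    exact ⟨z.re, hre, Complex.ext (by simp) (by simp [him])⟩

theorem _root_.TendstoLocallyUniformly.differentiable {ι : Type*} {l : Filter ι} [l.NeBot]
    {F : ι → ℂ → ℂ} {f : ℂ → ℂ} (hlim : TendstoLocallyUniformly F f l)
    (hF : ∀ i, Differentiable ℂ (F i)) : Differentiable ℂ f := by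
  rw [← differentiableOn_univ]
  exact (tendstoLocallyUniformlyOn_univ.2 hlim).differentiableOn
    (.of_forall fun i => (hF i).differentiableOn) isOpen_univ

theorem _root_.Differentiable.eventually_ne_zero_nhdsNE {E : Type*} [NormedAddCommGroup E]
    [NormedSpace ℂ E] [CompleteSpace E] {f : ℂ → E} (hf : Differentiable ℂ f)
    (hne : ∃ z, f z ≠ 0) (z₀ : ℂ) : ∀ᶠ w in 𝓝[≠] z₀, f w ≠ 0 := by
  obtain ⟨w, hw⟩ := hne
  have hana : AnalyticOnNhd ℂ f univ := fun z _ => hf.analyticAt z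
  refine (hana z₀ trivial).eventually_eq_zero_or_eventually_ne_zero.resolve_left fun h => hw ?_
  exact hana.eqOn_zero_of_preconnected_of_eventuallyEq_zero isPreconnected_univ trivial h trivial

section Hurwitz

variable {E : Type*} [NormedAddCommGroup E] [NormedSpace ℂ E] [Nontrivial E]

theorem le_norm_of_forall_mem_frontier_le_norm {g : E → ℂ} {U : Set E}
    (hU : Bornology.IsBounded U) (hg : DiffContOnCl ℂ g U) (hg₀ : ∀ z ∈ closure U, g z ≠ 0)
    {c : ℝ} (hc : ∀ z ∈ frontier U, c ≤ ‖g z‖) {z : E} (hz : z ∈ closure U) : c ≤ ‖g z‖ := by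
  rcases le_or_gt c 0 with hc₀ | hc₀
  · exact hc₀.trans (norm_nonneg _)
  have hinv : ‖(g z)⁻¹‖ ≤ c⁻¹ :=
    Complex.norm_le_of_forall_mem_frontier_norm_le hU (hg.inv hg₀)
      (fun w hw => by simpa only [Pi.inv_apply, norm_inv] using inv_anti₀ hc₀ (hc w hw)) hz
  rwa [norm_inv, inv_le_inv₀ (norm_pos_iff.2 (hg₀ z hz)) hc₀] at hinv

theorem ne_zero_of_tendstoUniformlyOn_closure [ProperSpace E] {ι : Type*} {l : Filter ι}
    [l.NeBot] {F : ι → E → ℂ} {f : E → ℂ} {U : Set E} (hU : Bornology.IsBounded U)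
    (hF : ∀ i, DiffContOnCl ℂ (F i) U) (hF₀ : ∀ i, ∀ z ∈ closure U, F i z ≠ 0)
    (hlim : TendstoUniformlyOn F f l (closure U)) (hf : ContinuousOn f (frontier U))
    (hf₀ : ∀ z ∈ frontier U, f z ≠ 0) {z : E} (hz : z ∈ closure U) : f z ≠ 0 := by
  have hcompact : IsCompact (frontier U) :=
    hU.isCompact_closure.of_isClosed_subset isClosed_frontier frontier_subset_closure
  obtain ⟨m, hm, hfm⟩ :=
    hcompact.exists_forall_le' hf.norm fun w hw => norm_pos_iff.2 (hf₀ w hw)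
  obtain ⟨i, hi⟩ := (Metric.tendstoUniformlyOn_iff.1 hlim (m / 2) (half_pos hm)).exists
  have hFi : ∀ w ∈ frontier U, m / 2 ≤ ‖F i w‖ := fun w hw => by
    have hclose := hi w (frontier_subset_closure hw)
    rw [dist_eq_norm] at hclose
    linarith [hfm w hw, norm_sub_norm_le (f w) (F i w)]
  have hFiz := le_norm_of_forall_mem_frontier_le_norm hU (hF i) (hF₀ i) hFi hz
  intro hfz
  have hclose := hi z hz
  rw [hfz, dist_zero_left] at hclose
  linarith

end Hurwitz

/-- If `(v_n)` is a sequence of complex polynomials all of whose roots are nonpositive reals,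
converging uniformly on every compact subset of `ℂ` to a function `v` that is not identically
zero, then every zero of `v` is a nonpositive real number. -/
theorem statement_12 (v : ℕ → Polynomial ℂ) (f : ℂ → ℂ)
    (hroots : ∀ (n : ℕ) (z : ℂ), (v n).IsRoot z → ∃ r : ℝ, r ≤ 0 ∧ z = (r : ℂ))
    (hconv : ∀ K : Set ℂ, IsCompact K →
      TendstoUniformlyOn (fun n z => (v n).eval z) f atTop K)
    (hne : ∃ z : ℂ, f z ≠ 0) :
    ∀ z : ℂ, f z = 0 → ∃ r : ℝ, r ≤ 0 ∧ z = (r : ℂ) := by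
  intro z₀ hz₀
  rw [exists_nonpos_ofReal_eq_iff_notMem_slitPlane]
  intro hslit
  have hf : Differentiable ℂ f :=
    (tendstoLocallyUniformly_iff_forall_isCompact.2 hconv).differentiable fun n =>
      (v n).differentiable
  obtain ⟨r, hr, hball, hsphere⟩ :
      ∃ r > 0, closedBall z₀ r ⊆ slitPlane ∧ ∀ w ∈ sphere z₀ r, f w ≠ 0 := by
    obtain ⟨ε, hε, hεsub⟩ := Metric.eventually_nhds_iff.1 <|
      (isOpen_slitPlane.eventually_mem hslit).and
      (eventually_nhdsWithin_iff.1 (hf.eventually_ne_zero_nhdsNE hne z₀))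
    have hsub : closedBall z₀ (ε / 2) ⊆ ball z₀ ε := closedBall_subset_ball (half_lt_self hε)
    exact ⟨ε / 2, half_pos hε, fun w hw => (hεsub (hsub hw)).1, fun w hw =>
      (hεsub (hsub (sphere_subset_closedBall hw))).2 (ne_of_mem_sphere hw (half_pos hε).ne')⟩
  have hpoly : ∀ n, ∀ w ∈ slitPlane, (v n).eval w ≠ 0 := fun n w hw h0 =>
    exists_nonpos_ofReal_eq_iff_notMem_slitPlane.1 (hroots n w h0) hw
  have hclosure : closure (ball z₀ r) = closedBall z₀ r := closure_ball z₀ hr.ne'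
  refine ne_zero_of_tendstoUniformlyOn_closure isBounded_ball
    (fun n => (v n).differentiable.diffContOnCl) (fun n w hw => hpoly n w (hball (hclosure ▸ hw)))
    (hclosure ▸ hconv _ (isCompact_closedBall z₀ r)) hf.continuous.continuousOn
    (by rwa [frontier_ball z₀ hr.ne']) (subset_closure (mem_ball_self hr)) hz₀

end Stmt12
end

section
/- For every integer p ≥ 1 there exists a constant C > 0 such that |ψ(x)| = O(exp(−C‖x‖^{1/(2p)})) as ‖x‖ → ∞; more precisely, there exist C > 0 and R > 0 such that |ψ(x)| ≤ exp(−C‖x‖^{1/(2p)}) for every x ∈ ℝ^p with ‖x‖ ≥ R, where ‖·‖ denotes the Euclidean norm on ℝ^p. -/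
/-!
Since `1 - exp(iθ)` has real part `1 - cos θ`, `|ψ(x)| = exp(-J(x)/16π)` with
`J(x) = ∫ (1 - cos S_x(t)) dt` and `S_x(t) = Σ_q x_q t^{-2q}`. The substitution `t ↦ λt` gives
`J(x) = λ J(δ_λ x)` for the anisotropic dilation `(δ_λ x)_q = x_q / λ^{2q}`, and
`λ = max_q |x_q|^{1/2q}` puts `δ_λ x` on the unit sphere of the sup norm. There the continuous
function `J` has a positive minimum, because `J(y) > 0` for `y ≠ 0`: `S_y(t) = P(t⁻²)` for a
nonzero polynomial `P` without constant term, so `0 < |S_y(t)| < 2π` for all large `t`.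
Finally `λ ≥ ‖x‖_∞^{1/2p}` as soon as `‖x‖_∞ ≥ 1`.
-/

open MeasureTheory Filter Real
noncomputable section
namespace Stmt13

/-- `ψ(x₁,…,x_p) = exp(−(1/16π) ∫_ℝ (1 − exp(i Σ_{q=1}^p x_q/t^{2q})) dt)`. -/
def psi (p : ℕ) (x : Fin p → ℝ) : ℂ :=
  Complex.exp (-((((16 * π)⁻¹ : ℝ) : ℂ) *
    ∫ t : ℝ, (1 - Complex.exp (Complex.I *
      ((∑ q : Fin p, x q / t ^ (2 * (q.1 + 1)) : ℝ) : ℂ)))))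

open Polynomial Topology

variable {p : ℕ}

def phase (x : Fin p → ℝ) (t : ℝ) : ℝ := ∑ q : Fin p, x q / t ^ (2 * (q.1 + 1))

def phasePoly (x : Fin p → ℝ) : ℝ[X] := ∑ q : Fin p, C (x q) * X ^ (q.1 + 1)

lemma phase_eq_eval (x : Fin p → ℝ) (t : ℝ) : phase x t = (phasePoly x).eval (t ^ 2)⁻¹ := by
  simp only [phase, phasePoly, eval_finsetSum, eval_mul, eval_C, eval_pow, eval_X, ← pow_mul,
    inv_pow, div_eq_mul_inv]

lemma phasePoly_coeff_succ (x : Fin p → ℝ) (q : Fin p) : (phasePoly x).coeff (q.1 + 1) = x q := by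
  simp [phasePoly, finsetSum_coeff, Fin.val_inj]

lemma phasePoly_ne_zero {x : Fin p → ℝ} (hx : x ≠ 0) : phasePoly x ≠ 0 := by
  obtain ⟨q, hq⟩ := Function.ne_iff.1 hx
  intro h
  exact hq (by simpa [h] using (phasePoly_coeff_succ x q).symm)

lemma tendsto_inv_sq_atTop : Tendsto (fun t : ℝ => (t ^ 2)⁻¹) atTop (𝓝[>] 0) :=
  tendsto_inv_atTop_nhdsGT_zero.comp (tendsto_pow_atTop two_ne_zero)

lemma tendsto_phase_atTop (x : Fin p → ℝ) : Tendsto (phase x) atTop (𝓝 0) := by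
  have h0 : (phasePoly x).eval 0 = 0 := by simp [phasePoly, eval_finsetSum]
  have := ((phasePoly x).continuous.tendsto 0).comp
    (tendsto_nhdsWithin_iff.1 tendsto_inv_sq_atTop).1
  rw [h0] at this
  simpa only [Function.comp_def, ← phase_eq_eval] using this

lemma eventually_phase_ne_zero {x : Fin p → ℝ} (hx : x ≠ 0) : ∀ᶠ t in atTop, phase x t ≠ 0 := by
  set s := {u | (phasePoly x).IsRoot u} \ {0}
  have hs : sᶜ ∈ 𝓝 (0 : ℝ) :=
    ((finite_setOfPred_isRoot (phasePoly_ne_zero hx)).sdiff.isClosed).compl_mem_nhds (by simp)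
  have hpos : ∀ᶠ u in 𝓝[>] (0 : ℝ), (phasePoly x).eval u ≠ 0 := by
    filter_upwards [nhdsWithin_le_nhds hs, self_mem_nhdsWithin] with u hu (hu0 : 0 < u)
    simpa [s, hu0.ne'] using hu
  filter_upwards [tendsto_inv_sq_atTop.eventually hpos] with t ht
  rwa [phase_eq_eval]

lemma abs_phase_le (x : Fin p → ℝ) {t : ℝ} (ht : 1 ≤ |t|) :
    |phase x t| ≤ (∑ q, |x q|) / t ^ 2 := by
  rw [Finset.sum_div]
  refine (Finset.abs_sum_le_sum_abs _ _).trans (Finset.sum_le_sum fun q _ => ?_)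
  rw [abs_div, abs_pow, ← sq_abs t]
  gcongr
  omega

lemma norm_one_sub_exp_I_mul_le_min (θ : ℝ) : ‖1 - Complex.exp (Complex.I * θ)‖ ≤ min 2 |θ| := by
  refine le_min ?_ ?_
  · calc ‖1 - Complex.exp (Complex.I * θ)‖ ≤ ‖(1 : ℂ)‖ + ‖Complex.exp (Complex.I * θ)‖ :=
          norm_sub_le _ _
      _ = 2 := by rw [mul_comm, Complex.norm_exp_ofReal_mul_I]; norm_num
  · rw [norm_sub_rev]
    exact Real.norm_exp_I_mul_ofReal_sub_one_le

/-- Away from `t = 0` the phase decays like `t⁻²`; near `t = 0` the integrand is bounded by `2`. -/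
lemma norm_one_sub_exp_I_mul_phase_le (x : Fin p → ℝ) {B : ℝ} (hB : ∑ q, |x q| ≤ B) (t : ℝ) :
    ‖1 - Complex.exp (Complex.I * phase x t)‖ ≤ (4 + 2 * B) * (1 + t ^ 2)⁻¹ := by
  have hB0 : 0 ≤ B := (Finset.sum_nonneg fun q _ => abs_nonneg (x q)).trans hB
  have hmin := norm_one_sub_exp_I_mul_le_min (phase x t)
  rw [← div_eq_mul_inv, le_div_iff₀ (by positivity)]
  rcases le_or_gt 1 |t| with ht | ht
  · have ht2 : 1 ≤ t ^ 2 := by nlinarith [sq_abs t]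
    have hle : |phase x t| * t ^ 2 ≤ B := by
      rw [← le_div_iff₀ (by positivity)]
      exact (abs_phase_le x ht).trans (by gcongr)
    nlinarith [min_le_right 2 |phase x t|, norm_nonneg (1 - Complex.exp (Complex.I * phase x t))]
  · have ht2 : t ^ 2 ≤ 1 := by nlinarith [sq_abs t, abs_nonneg t]
    nlinarith [min_le_left 2 |phase x t|, norm_nonneg (1 - Complex.exp (Complex.I * phase x t))]

@[fun_prop]
lemma measurable_phase (x : Fin p → ℝ) : Measurable (phase x) := by
  unfold phase
  fun_prop

lemma integrable_one_sub_exp_I_mul_phase (x : Fin p → ℝ) :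
    Integrable fun t => 1 - Complex.exp (Complex.I * phase x t) :=
  (integrable_inv_one_add_sq.const_mul _).mono' (Measurable.aestronglyMeasurable (by fun_prop))
    (ae_of_all _ (norm_one_sub_exp_I_mul_phase_le x le_rfl))

lemma one_sub_cos_eq_re (θ : ℝ) : 1 - cos θ = (1 - Complex.exp (Complex.I * θ)).re := by
  rw [mul_comm, Complex.sub_re, Complex.exp_ofReal_mul_I_re, Complex.one_re]

lemma integrable_one_sub_cos_phase (x : Fin p → ℝ) : Integrable fun t => 1 - cos (phase x t) := by
  simp only [one_sub_cos_eq_re]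
  exact (integrable_one_sub_exp_I_mul_phase x).re

def cosIntegral (x : Fin p → ℝ) : ℝ := ∫ t, (1 - cos (phase x t))

lemma norm_psi (x : Fin p → ℝ) : ‖psi p x‖ = exp (-((16 * π)⁻¹ * cosIntegral x)) := by
  rw [psi, Complex.norm_exp, Complex.neg_re, Complex.re_ofReal_mul, cosIntegral]
  congr 3
  simp only [one_sub_cos_eq_re]
  exact (integral_re (integrable_one_sub_exp_I_mul_phase x)).symm

lemma continuous_cosIntegral : Continuous (cosIntegral (p := p)) := by
  rw [continuous_iff_continuousAt]
  intro x₀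
  set B := ∑ q, |x₀ q| + 1
  have hB : ∀ᶠ x in 𝓝 x₀, ∑ q, |x q| ≤ B :=
    ((Continuous.continuousAt (by fun_prop)).eventually_lt continuousAt_const
      (lt_add_one _)).mono fun _ h => h.le
  refine continuousAt_of_dominated (bound := fun t => (4 + 2 * B) * (1 + t ^ 2)⁻¹)
    (Eventually.of_forall fun x => Measurable.aestronglyMeasurable (by fun_prop)) ?_
    (integrable_inv_one_add_sq.const_mul _)
    (ae_of_all _ fun t =>
      (by unfold phase; fun_prop : Continuous fun x => 1 - cos (phase x t)).continuousAt)
  filter_upwards [hB] with x hx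
  refine ae_of_all _ fun t => ?_
  rw [Real.norm_eq_abs, one_sub_cos_eq_re]
  exact (Complex.abs_re_le_norm _).trans (norm_one_sub_exp_I_mul_phase_le x hx t)

def dilate (l : ℝ) (x : Fin p → ℝ) : Fin p → ℝ := fun q => x q / l ^ (2 * (q.1 + 1))

lemma phase_mul (x : Fin p → ℝ) (l t : ℝ) : phase x (l * t) = phase (dilate l x) t := by
  simp only [phase, dilate, mul_pow, div_div]

lemma cosIntegral_eq_mul_cosIntegral_dilate (x : Fin p → ℝ) {l : ℝ} (hl : 0 < l) :
    cosIntegral x = l * cosIntegral (dilate l x) := by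
  have := Measure.integral_comp_mul_left (fun t => 1 - cos (phase x t)) l
  simp only [phase_mul] at this
  rw [cosIntegral, cosIntegral, this, abs_of_pos (inv_pos.2 hl), smul_eq_mul,
    mul_inv_cancel_left₀ hl.ne']

lemma cosIntegral_pos {x : Fin p → ℝ} (hx : x ≠ 0) : 0 < cosIntegral x := by
  have hsmall : Set.Ioo (-(2 * π)) (2 * π) ∈ 𝓝 (0 : ℝ) :=
    Ioo_mem_nhds (by linarith [pi_pos]) (by linarith [pi_pos])
  have hev : ∀ᶠ t in atTop, 0 < 1 - cos (phase x t) := by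
    filter_upwards [eventually_phase_ne_zero hx, tendsto_phase_atTop x hsmall] with t hne hlt
    have hcos := (cos_eq_one_iff_of_lt_of_lt hlt.1 hlt.2).not.2 hne
    linarith [(cos_le_one (phase x t)).lt_of_ne hcos]
  obtain ⟨T, hT⟩ := eventually_atTop.1 hev
  rw [cosIntegral, integral_pos_iff_support_of_nonneg (fun t => sub_nonneg.2 (cos_le_one _))
    (integrable_one_sub_cos_phase x)]
  calc 0 < volume (Set.Ici T) := by simp
    _ ≤ _ := measure_mono fun t ht => (hT t ht).ne'

/-- Homogeneous of degree one for the dilations: `homNorm (dilate l x) = homNorm x / l`. -/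
def homNorm (x : Fin p → ℝ) : ℝ := ⨆ q : Fin p, |x q| ^ (((2 * (q.1 + 1) : ℕ) : ℝ)⁻¹)

lemma homNorm_nonneg (x : Fin p → ℝ) : 0 ≤ homNorm x :=
  Real.iSup_nonneg fun _ => rpow_nonneg (abs_nonneg _) _

lemma rpow_le_homNorm (x : Fin p → ℝ) (q : Fin p) :
    |x q| ^ (((2 * (q.1 + 1) : ℕ) : ℝ)⁻¹) ≤ homNorm x :=
  le_ciSup (f := fun q : Fin p => |x q| ^ (((2 * (q.1 + 1) : ℕ) : ℝ)⁻¹)) (Finite.bddAbove_range _) q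

lemma abs_le_homNorm_pow (x : Fin p → ℝ) (q : Fin p) : |x q| ≤ homNorm x ^ (2 * (q.1 + 1)) :=
  calc |x q| = (|x q| ^ (((2 * (q.1 + 1) : ℕ) : ℝ)⁻¹)) ^ (2 * (q.1 + 1)) :=
        (rpow_inv_natCast_pow (abs_nonneg _) (by omega)).symm
    _ ≤ homNorm x ^ (2 * (q.1 + 1)) :=
        pow_le_pow_left₀ (rpow_nonneg (abs_nonneg _) _) (rpow_le_homNorm x q) _

lemma homNorm_pos {x : Fin p → ℝ} (hx : x ≠ 0) : 0 < homNorm x := by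
  obtain ⟨q, hq⟩ := Function.ne_iff.1 hx
  exact (rpow_pos_of_pos (abs_pos.2 hq) _).trans_le (rpow_le_homNorm x q)

lemma norm_dilate_homNorm {x : Fin p → ℝ} (hx : x ≠ 0) : ‖dilate (homNorm x) x‖ = 1 := by
  have hN := homNorm_pos hx
  have : Nonempty (Fin p) := let ⟨q, _⟩ := Function.ne_iff.1 hx; ⟨q⟩
  obtain ⟨q₀, hq₀⟩ :=
    exists_eq_ciSup_of_finite (f := fun q : Fin p => |x q| ^ (((2 * (q.1 + 1) : ℕ) : ℝ)⁻¹))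
  have habs (q : Fin p) : |dilate (homNorm x) x q| = |x q| / homNorm x ^ (2 * (q.1 + 1)) := by
    rw [dilate, abs_div, abs_of_pos (pow_pos hN _)]
  have hq₀' : |x q₀| = homNorm x ^ (2 * (q₀.1 + 1)) := by
    rw [homNorm, ← hq₀, rpow_inv_natCast_pow (abs_nonneg _) (by omega)]
  apply le_antisymm
  · refine (pi_norm_le_iff_of_nonneg zero_le_one).2 fun q => ?_
    rw [Real.norm_eq_abs, habs, div_le_one (pow_pos hN _)]
    exact abs_le_homNorm_pow x q
  · calc 1 = |dilate (homNorm x) x q₀| := by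
          rw [habs, ← hq₀', div_self (hq₀' ▸ pow_pos hN _).ne']
      _ ≤ ‖dilate (homNorm x) x‖ := norm_le_pi_norm (dilate (homNorm x) x) q₀

lemma norm_rpow_le_homNorm {x : Fin p → ℝ} (hx : 1 ≤ ‖x‖) :
    ‖x‖ ^ ((1 : ℝ) / (2 * p)) ≤ homNorm x := by
  by_contra! h
  have hlt (q : Fin p) : |x q| < ‖x‖ :=
    calc |x q| ≤ homNorm x ^ (2 * (q.1 + 1)) := abs_le_homNorm_pow x q
      _ < (‖x‖ ^ ((1 : ℝ) / (2 * p))) ^ (2 * (q.1 + 1)) :=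
          pow_lt_pow_left₀ h (homNorm_nonneg x) (by omega)
      _ = ‖x‖ ^ (((q.1 + 1 : ℕ) : ℝ) / p) := by
          rw [← rpow_mul_natCast (norm_nonneg x)]
          congr 1
          push_cast
          ring
      _ ≤ ‖x‖ ^ (1 : ℝ) :=
          rpow_le_rpow_of_exponent_le hx (div_le_one_of_le₀ (by exact_mod_cast q.2) (by positivity))
      _ = ‖x‖ := rpow_one _
  exact lt_irrefl ‖x‖
    ((pi_norm_lt_iff (by linarith)).2 fun q => (Real.norm_eq_abs _).trans_lt (hlt q))

lemma exists_mul_rpow_le_cosIntegral (p : ℕ) :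
    ∃ c > 0, ∀ x : Fin p → ℝ, 1 ≤ ‖x‖ → c * ‖x‖ ^ ((1 : ℝ) / (2 * p)) ≤ cosIntegral x := by
  obtain ⟨c, hc, hmin⟩ := (isCompact_sphere (0 : Fin p → ℝ) 1).exists_forall_le'
    continuous_cosIntegral.continuousOn (a := 0)
    fun y hy => cosIntegral_pos (by rintro rfl; simp at hy)
  refine ⟨c, hc, fun x hx => ?_⟩
  have hx0 : x ≠ 0 := by rintro rfl; norm_num at hx
  calc c * ‖x‖ ^ ((1 : ℝ) / (2 * p)) ≤ homNorm x * c := by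
        rw [mul_comm]; gcongr; exact norm_rpow_le_homNorm hx
    _ ≤ homNorm x * cosIntegral (dilate (homNorm x) x) :=
        mul_le_mul_of_nonneg_left (hmin _ (mem_sphere_zero_iff_norm.2 (norm_dilate_homNorm hx0)))
          (homNorm_nonneg x)
    _ = cosIntegral x := (cosIntegral_eq_mul_cosIntegral_dilate x (homNorm_pos hx0)).symm

lemma exists_norm_le_mul_norm_ofLp (p : ℕ) :
    ∃ K > 0, ∀ x : EuclideanSpace ℝ (Fin p), ‖x‖ ≤ K * ‖WithLp.ofLp x‖ := by
  obtain ⟨K, hK⟩ : ∃ K : NNReal, AntilipschitzWith K (@WithLp.ofLp 2 (Fin p → ℝ)) :=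
    ⟨_, PiLp.antilipschitzWith_ofLp 2 _⟩
  refine ⟨K + 1, by positivity, fun x => (hK.le_mul_norm (WithLp.ofLp_zero 2) x).trans ?_⟩
  gcongr
  linarith

theorem statement_13_general (p : ℕ) :
    ∃ C : ℝ, 0 < C ∧ ∃ R : ℝ, 0 < R ∧
      ∀ x : EuclideanSpace ℝ (Fin p), R ≤ ‖x‖ →
        ‖psi p x‖ ≤ Real.exp (-C * ‖x‖ ^ ((1 : ℝ) / (2 * p))) := by
  obtain ⟨c, hc, hJ⟩ := exists_mul_rpow_le_cosIntegral p
  obtain ⟨K, hK, hnorm⟩ := exists_norm_le_mul_norm_ofLp p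
  set e : ℝ := (1 : ℝ) / (2 * p)
  refine ⟨(16 * π)⁻¹ * c / K ^ e, by positivity, K, hK, fun x hx => ?_⟩
  have hxK : ‖x‖ / K ≤ ‖WithLp.ofLp x‖ := by rw [div_le_iff₀' hK]; exact hnorm x
  have hJx : c * (‖x‖ / K) ^ e ≤ cosIntegral (WithLp.ofLp x) := by
    refine le_trans ?_ (hJ _ (((one_le_div hK).2 hx).trans hxK))
    gcongr
  rw [norm_psi, exp_le_exp, neg_mul, neg_le_neg_iff]
  calc (16 * π)⁻¹ * c / K ^ e * ‖x‖ ^ e = (16 * π)⁻¹ * (c * (‖x‖ / K) ^ e) := by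
        rw [div_rpow (norm_nonneg x) hK.le]; ring
    _ ≤ (16 * π)⁻¹ * cosIntegral (WithLp.ofLp x) := by gcongr

/-- `|ψ(x)| ≤ exp(−C‖x‖^{1/(2p)})` for ‖x‖ large, ‖·‖ the Euclidean norm on `ℝ^p`. -/
theorem statement_13 (p : ℕ) (hp : 1 ≤ p) :
    ∃ C : ℝ, 0 < C ∧ ∃ R : ℝ, 0 < R ∧
      ∀ x : EuclideanSpace ℝ (Fin p), R ≤ ‖x‖ →
        ‖psi p x‖ ≤ Real.exp (-C * ‖x‖ ^ ((1 : ℝ) / (2 * p))) :=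
  statement_13_general p

end Stmt13
end
end
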